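/- arXiv:1611.03772 — 8 statements merged into one kernel-verified Lean document; each statement's English description precedes it below -/
import Mathlib

section
/- Let μ be a complex Borel measure on ℂ^∞ = ℕ → ℂ (product topology) whose total variation |μ| is finite and concentrated on 𝔻^∞ = {z : |z_j| < 1 for all j}, and suppose μ is a Carleson measure for H²(𝕋^∞), i.e. there is C > 0 with ∫ |f(z)|² d|μ|(z) ≤ C ‖f‖² for every polynomial f. Define α(p^κ) = ∫ z^κ dμ(z) for every finitely supported multi-index κ. Then the Helson matrix M(α) is bounded on ℓ²(ℕ). -/
open MeasureTheory Finset
open scoped BigOperators ENNReal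

/-- `pPow κ = ∏_j p_j^{κ_j}` where `p_0 < p_1 < ⋯` are the primes. -/
noncomputable def pPow (κ : ℕ →₀ ℕ) : ℕ :=
  κ.prod fun j e => Nat.nth Nat.Prime j ^ e

/-- The `H²(𝕋^∞)` norm of a polynomial: `‖f‖ = (∑_κ |f_κ|²)^{1/2}`. -/
noncomputable def h2Norm (f : MvPolynomial ℕ ℂ) : ℝ :=
  Real.sqrt (∑ κ ∈ f.support, ‖MvPolynomial.coeff κ f‖ ^ 2)

/-!
The Bohr lift `𝓑` sends the sequence `δ_n`, `n = p^κ`, to the monomial `z^κ`; it maps sequences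
`c` with `c 0 = 0` isometrically into `H²(𝕋^∞)`. Since `κ(nm) = κ(n) + κ(m)`, the Helson form is
`∑ α(nm) f_n conj(g_m) = ∫ 𝓑f · 𝓑(conj g) dμ`, and Cauchy–Schwarz in `L²(|μ|)` followed by the
Carleson inequality bounds it by `C ‖f‖ ‖g‖`.
-/

open MvPolynomial

/-- The exponent vector `κ(n)` with `n = p^κ(n)`; `κ(0) = 0`. -/
noncomputable def primeExponents (n : ℕ) : ℕ →₀ ℕ :=
  Finsupp.comapDomain (Nat.nth Nat.Prime) n.factorization
    (Nat.nth_injective Nat.infinite_setOfPred_prime).injOn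

lemma primeExponents_apply (n j : ℕ) :
    primeExponents n j = n.factorization (Nat.nth Nat.Prime j) := rfl

lemma pPow_primeExponents {n : ℕ} (hn : n ≠ 0) : pPow (primeExponents n) = n := by
  conv_rhs => rw [← Nat.prod_factorization_pow_eq_self hn]
  refine Finset.prod_nbij (Nat.nth Nat.Prime)
    (fun j hj => by rw [Finsupp.mem_support_iff] at hj ⊢; exact hj)
    (Nat.nth_injective Nat.infinite_setOfPred_prime).injOn (fun p hp => ?_) (fun _ _ => rfl)
  have hp' : n.factorization p ≠ 0 := Finsupp.mem_support_iff.mp hp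
  have hprime : p.Prime := Nat.prime_of_mem_primeFactors (Nat.support_factorization n ▸ hp)
  exact ⟨Nat.count Nat.Prime p, Finsupp.mem_support_iff.mpr
    (by rwa [primeExponents_apply, Nat.nth_count hprime]), Nat.nth_count hprime⟩

lemma primeExponents_mul {n m : ℕ} (hn : n ≠ 0) (hm : m ≠ 0) :
    primeExponents (n * m) = primeExponents n + primeExponents m := by
  ext j
  simp [primeExponents_apply, Nat.factorization_mul hn hm]

lemma primeExponents_injOn : Set.InjOn primeExponents {n | n ≠ 0} := fun a ha b hb h => by
  rw [← pPow_primeExponents ha, ← pPow_primeExponents hb, h]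

section BohrLift

variable {R : Type*} [CommSemiring R]

noncomputable def bohrLift (c : ℕ →₀ R) : MvPolynomial ℕ R :=
  ∑ n ∈ c.support, monomial (primeExponents n) (c n)

lemma bohrLift_mul (f g : ℕ →₀ R) :
    bohrLift f * bohrLift g = ∑ n ∈ f.support, ∑ m ∈ g.support,
      monomial (primeExponents n + primeExponents m) (f n * g m) := by
  simp only [bohrLift, Finset.sum_mul_sum, monomial_mul]

lemma coeff_bohrLift {c : ℕ →₀ R} (hc : c 0 = 0) {n : ℕ} (hn : n ∈ c.support) :
    coeff (primeExponents n) (bohrLift c) = c n := by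
  have hsupp : ∀ m ∈ c.support, m ≠ 0 := fun m hm h => by simp_all
  rw [bohrLift, coeff_sum, Finset.sum_eq_single_of_mem n hn
    (fun m hm hmn => by rw [coeff_monomial, if_neg fun h => hmn
      (primeExponents_injOn (hsupp m hm) (hsupp n hn) h)]), coeff_monomial, if_pos rfl]

lemma support_bohrLift_subset (c : ℕ →₀ R) :
    (bohrLift c).support ⊆ c.support.image primeExponents := by
  intro κ hκ
  rw [mem_support_iff] at hκ
  by_contra hmem
  refine hκ ((coeff_sum _ _ _).trans (Finset.sum_eq_zero fun n hn => ?_))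
  rw [coeff_monomial, if_neg]
  rintro rfl
  exact hmem (Finset.mem_image_of_mem _ hn)

end BohrLift

lemma h2Norm_nonneg (f : MvPolynomial ℕ ℂ) : 0 ≤ h2Norm f := Real.sqrt_nonneg _

lemma h2Norm_bohrLift {c : ℕ →₀ ℂ} (hc : c 0 = 0) :
    h2Norm (bohrLift c) = Real.sqrt (∑ n ∈ c.support, ‖c n‖ ^ 2) := by
  have hsupp : ∀ m ∈ c.support, m ≠ 0 := fun m hm h => by simp_all
  rw [h2Norm, Finset.sum_subset (support_bohrLift_subset c) fun κ _ hκ => by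
      rw [notMem_support_iff.mp hκ, norm_zero, zero_pow two_ne_zero],
    Finset.sum_image fun x hx y hy h => primeExponents_injOn (hsupp x hx) (hsupp y hy) h]
  exact congrArg _ (Finset.sum_congr rfl fun n hn => by rw [coeff_bohrLift hc hn])

lemma norm_eval_le_sum_norm_coeff {σ 𝕜 : Type*} [NormedField 𝕜] {z : σ → 𝕜}
    (hz : ∀ j, ‖z j‖ ≤ 1) (P : MvPolynomial σ 𝕜) :
    ‖eval z P‖ ≤ ∑ κ ∈ P.support, ‖coeff κ P‖ := by
  refine (norm_sum_le _ _).trans (Finset.sum_le_sum fun κ _ => ?_)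
  rw [norm_mul, Finsupp.prod, norm_prod]
  exact mul_le_of_le_one_right (norm_nonneg _) (Finset.prod_le_one (fun _ _ => norm_nonneg _)
    fun j _ => by rw [norm_pow]; exact pow_le_one₀ (norm_nonneg _) (hz j))

section PolydiscMeasure

variable {ν : Measure (ℕ → ℂ)} (hD : ∀ᵐ z ∂ν, ∀ j, ‖z j‖ ≤ 1)
include hD

lemma integrable_eval_mul {w : (ℕ → ℂ) → ℂ} (hw : Integrable w ν) (P : MvPolynomial ℕ ℂ) :
    Integrable (fun z => eval z P * w z) ν :=
  hw.bdd_mul (continuous_eval P).measurable.aestronglyMeasurable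
    (hD.mono fun _ hz => norm_eval_le_sum_norm_coeff hz P)

lemma memLp_eval [IsFiniteMeasure ν] (p : ℝ≥0∞) (P : MvPolynomial ℕ ℂ) :
    MemLp (fun z => eval z P) p ν :=
  MemLp.of_bound (continuous_eval P).measurable.aestronglyMeasurable _
    (hD.mono fun _ hz => norm_eval_le_sum_norm_coeff hz P)

lemma norm_integral_eval_mul_le [IsFiniteMeasure ν] {w : (ℕ → ℂ) → ℂ}
    (hw : ∀ᵐ z ∂ν, ‖w z‖ ≤ 1) (P Q : MvPolynomial ℕ ℂ) :
    ‖∫ z, eval z (P * Q) * w z ∂ν‖ ≤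
      Real.sqrt (∫ z, ‖eval z P‖ ^ 2 ∂ν) * Real.sqrt (∫ z, ‖eval z Q‖ ^ 2 ∂ν) := by
  have hPQ : Integrable (fun z => ‖eval z P‖ * ‖eval z Q‖) ν :=
    ((memLp_eval hD 2 P).integrable_mul (memLp_eval hD 2 Q)).norm.congr
      (.of_forall fun z => norm_mul _ _)
  calc ‖∫ z, eval z (P * Q) * w z ∂ν‖
      ≤ ∫ z, ‖eval z (P * Q) * w z‖ ∂ν := norm_integral_le_integral_norm _
    _ ≤ ∫ z, ‖eval z P‖ * ‖eval z Q‖ ∂ν :=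
        integral_mono_of_nonneg (.of_forall fun _ => norm_nonneg _) hPQ
          (hw.mono fun z hwz => by
            dsimp only
            rw [map_mul, norm_mul, norm_mul]
            exact mul_le_of_le_one_right (by positivity) hwz)
    _ ≤ (∫ z, ‖eval z P‖ ^ (2 : ℝ) ∂ν) ^ (1 / 2 : ℝ) *
          (∫ z, ‖eval z Q‖ ^ (2 : ℝ) ∂ν) ^ (1 / 2 : ℝ) :=
        integral_mul_norm_le_Lp_mul_Lq .two_two (by simpa using memLp_eval hD 2 P)
          (by simpa using memLp_eval hD 2 Q)
    _ = _ := by simp only [Real.rpow_two, Real.sqrt_eq_rpow]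

lemma norm_integral_eval_mul_le_of_carleson [IsFiniteMeasure ν] {w : (ℕ → ℂ) → ℂ}
    (hw : ∀ᵐ z ∂ν, ‖w z‖ ≤ 1) {C : ℝ} (hC : 0 ≤ C)
    (hCarleson : ∀ f : MvPolynomial ℕ ℂ, ∫ z, ‖eval z f‖ ^ 2 ∂ν ≤ C * h2Norm f ^ 2)
    (P Q : MvPolynomial ℕ ℂ) :
    ‖∫ z, eval z (P * Q) * w z ∂ν‖ ≤ C * h2Norm P * h2Norm Q := by
  have hsqrt (f : MvPolynomial ℕ ℂ) : Real.sqrt (∫ z, ‖eval z f‖ ^ 2 ∂ν) ≤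
      Real.sqrt C * h2Norm f := by
    rw [← Real.sqrt_sq (h2Norm_nonneg f), ← Real.sqrt_mul hC]
    exact Real.sqrt_le_sqrt (hCarleson f)
  calc ‖∫ z, eval z (P * Q) * w z ∂ν‖
      ≤ Real.sqrt (∫ z, ‖eval z P‖ ^ 2 ∂ν) * Real.sqrt (∫ z, ‖eval z Q‖ ^ 2 ∂ν) :=
        norm_integral_eval_mul_le hD hw P Q
    _ ≤ (Real.sqrt C * h2Norm P) * (Real.sqrt C * h2Norm Q) :=
        mul_le_mul (hsqrt P) (hsqrt Q) (Real.sqrt_nonneg _)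
          (mul_nonneg (Real.sqrt_nonneg C) (h2Norm_nonneg P))
    _ = C * h2Norm P * h2Norm Q := by
        rw [mul_mul_mul_comm, Real.mul_self_sqrt hC, mul_assoc]

lemma sum_moment_mul_eq_integral_eval_bohrLift {w : (ℕ → ℂ) → ℂ} (hw : Integrable w ν)
    {α : ℕ → ℂ} (hα : ∀ κ : ℕ →₀ ℕ, α (pPow κ) = ∫ z, (κ.prod fun j e => z j ^ e) * w z ∂ν)
    {f g : ℕ →₀ ℂ} (hf : f 0 = 0) (hg : g 0 = 0) :
    ∑ n ∈ f.support, ∑ m ∈ g.support, α (n * m) * f n * g m =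
      ∫ z, eval z (bohrLift f * bohrLift g) * w z ∂ν := by
  have hterm : ∀ n ∈ f.support, ∀ m ∈ g.support, α (n * m) * f n * g m =
      ∫ z, eval z (monomial (primeExponents n + primeExponents m) (f n * g m)) * w z ∂ν := by
    intro n hn m hm
    have hn0 : n ≠ 0 := fun h => Finsupp.mem_support_iff.mp hn (h ▸ hf)
    have hm0 : m ≠ 0 := fun h => Finsupp.mem_support_iff.mp hm (h ▸ hg)
    rw [← pPow_primeExponents (mul_ne_zero hn0 hm0), primeExponents_mul hn0 hm0, hα]
    simp only [eval_monomial, mul_assoc, integral_const_mul]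
    ring
  simp only [bohrLift_mul, map_sum, Finset.sum_mul]
  rw [integral_finsetSum _ fun n _ => integrable_finsetSum _ fun m _ =>
    integrable_eval_mul hD hw _]
  refine Finset.sum_congr rfl fun n hn => ?_
  rw [integral_finsetSum _ fun m _ => integrable_eval_mul hD hw _]
  exact Finset.sum_congr rfl (hterm n hn)

end PolydiscMeasure

/-- A complex measure `dμ = w dν` is encoded by its (finite) total variation
measure `ν` together with a unimodular density `w` (polar decomposition).
If `ν` is Carleson for `H²(𝕋^∞)` and is concentrated on `𝔻^∞`, then the Helson
matrix of the moment sequence `α(p^κ) = ∫ z^κ dμ(z)` is bounded on `ℓ²(ℕ)`. -/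
theorem stmt3 (ν : Measure (ℕ → ℂ)) [IsFiniteMeasure ν]
    (hconc : ν {z | ¬ ∀ j, ‖z j‖ < 1} = 0)
    (w : (ℕ → ℂ) → ℂ) (hw_meas : Measurable w)
    (hw : ∀ᵐ z ∂ν, ‖w z‖ = 1)
    (hCarleson : ∃ C > 0, ∀ f : MvPolynomial ℕ ℂ,
      ∫ z, ‖MvPolynomial.eval z f‖ ^ 2 ∂ν ≤ C * h2Norm f ^ 2)
    (α : ℕ → ℂ)
    (hα : ∀ κ : ℕ →₀ ℕ,
      α (pPow κ) = ∫ z, (κ.prod fun j e => z j ^ e) * w z ∂ν) :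
    ∃ C > 0, ∀ f g : ℕ →₀ ℂ, f 0 = 0 → g 0 = 0 →
      ‖∑ n ∈ f.support, ∑ m ∈ g.support,
          α (n * m) * f n * (starRingEnd ℂ) (g m)‖ ≤
        C * Real.sqrt (∑ n ∈ f.support, ‖f n‖ ^ 2) *
          Real.sqrt (∑ m ∈ g.support, ‖g m‖ ^ 2) := by
  obtain ⟨C, hC, hCar⟩ := hCarleson
  have hD : ∀ᵐ z ∂ν, ∀ j, ‖z j‖ ≤ 1 :=
    (measure_eq_zero_iff_ae_notMem.mp hconc).mono fun _ hz j => (not_not.mp hz j).le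
  have hw_int : Integrable w ν :=
    (integrable_const (1 : ℝ)).mono' hw_meas.aestronglyMeasurable (hw.mono fun _ h => h.le)
  refine ⟨C, hC, fun f g hf hg => ?_⟩
  set g' := g.mapRange (starRingEnd ℂ) (map_zero _)
  have hg'_supp : g'.support = g.support :=
    Finsupp.support_mapRange_of_injective _ _ (starRingEnd ℂ).injective
  have hg'0 : g' 0 = 0 := by simp [g', hg]
  have hg'_norm : ∑ m ∈ g'.support, ‖g' m‖ ^ 2 = ∑ m ∈ g.support, ‖g m‖ ^ 2 := by
    simp [hg'_supp, g']
  have hsum := sum_moment_mul_eq_integral_eval_bohrLift hD hw_int hα hf hg'0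
  simp only [hg'_supp, g', Finsupp.mapRange_apply] at hsum
  rw [hsum, ← h2Norm_bohrLift hf, ← hg'_norm, ← h2Norm_bohrLift hg'0]
  exact norm_integral_eval_mul_le_of_carleson hD (hw.mono fun _ h => h.le) hC.le hCar _ _
end

section
/- Let ν be a finite positive Borel measure on (1/2,∞) and let α(n) = ∫_{(1/2,∞)} n^{-s} dν(s) for n ≥ 1. Then there is a constant C > 0 such that ν((1/2, s]) ≤ C (s - 1/2) for all s > 1/2 if and only if there is a constant C' > 0 such that α(n) ≤ C' / (√n · log n) for all n ≥ 2. -/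
open MeasureTheory

/-!
Write `n ^ (-s) = n ^ (-1/2) * exp (-(s - 1/2) log n)`, so the claim compares the growth of
`ν((1/2, 1/2 + δ])` at `δ → 0` with the decay of the Laplace transform
`L(λ) = ∫ exp (-λ (s - 1/2)) dν(s)` along `λ = log n`.
If `ν((1/2, 1/2 + δ]) ≤ C δ`, the layer cake formula gives
`L(λ) = ∫₀¹ ν{s - 1/2 < -log t / λ} dt ≤ (C / λ) ∫₀¹ (-log t) dt = C / λ`.
Conversely `ν((1/2, 1/2 + δ]) e^{-λδ} ≤ L(λ) ≤ C' / λ`, and for `δ ≤ 1` an integer `n` with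
`1 ≤ δ log n ≤ 2` turns this into `ν((1/2, 1/2 + δ]) ≤ C' e² δ`; for `δ > 1` the total mass suffices.
-/

open Real Set

variable {ν : Measure ℝ} {a C l : ℝ}

lemma integral_rpow_neg_le_div_iff {x : ℝ} (hx : 1 < x) (B : ℝ) :
    ∫ s, x ^ (-s) ∂ν ≤ B / (√x * log x) ↔
      ∫ s, exp (-log x * (s - 1 / 2)) ∂ν ≤ B / log x := by
  have hx0 : 0 < x := zero_lt_one.trans hx
  have hsqrt : 0 < √x := sqrt_pos.2 hx0
  have hsplit : ∀ s, x ^ (-s) = (√x)⁻¹ * exp (-log x * (s - 1 / 2)) := by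
    intro s
    rw [rpow_def_of_pos hx0, sqrt_eq_rpow, rpow_def_of_pos hx0, ← exp_neg, ← exp_add]
    ring_nf
  simp_rw [hsplit, integral_const_mul]
  rw [inv_mul_le_iff₀ hsqrt, mul_div_assoc', mul_div_mul_left _ _ hsqrt.ne']

variable [IsFiniteMeasure ν]

lemma measure_Iio_add_le_ofReal (hν : ν (Iic a) = 0)
    (h : ∀ s, a < s → (ν (Ioc a s)).toReal ≤ C * (s - a)) (v : ℝ) :
    ν (Iio (a + v)) ≤ ENNReal.ofReal (C * v) := by
  rcases le_or_gt v 0 with hv | hv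
  · calc ν (Iio (a + v)) ≤ ν (Iic a) := measure_mono fun u hu => by
          simp only [mem_Iio, mem_Iic] at hu ⊢; linarith
      _ ≤ _ := by rw [hν]; exact zero_le
  · calc ν (Iio (a + v)) ≤ ν (Iic a ∪ Ioc a (a + v)) := by
          rw [Iic_union_Ioc_eq_Iic (by linarith)]; exact measure_mono Iio_subset_Iic_self
      _ ≤ ν (Iic a) + ν (Ioc a (a + v)) := measure_union_le _ _
      _ = ENNReal.ofReal (ν (Ioc a (a + v))).toReal := by
          rw [hν, zero_add, ENNReal.ofReal_toReal (measure_ne_top _ _)]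
      _ ≤ ENNReal.ofReal (C * v) :=
          ENNReal.ofReal_le_ofReal (by simpa using h (a + v) (by linarith))

lemma integral_exp_neg_mul_sub_le (hν : ν (Iic a) = 0) (hC : 0 ≤ C)
    (h : ∀ s, a < s → (ν (Ioc a s)).toReal ≤ C * (s - a)) (hl : 0 < l) :
    ∫ u, exp (-l * (u - a)) ∂ν ≤ C / l := by
  have hcont : Continuous fun u => exp (-l * (u - a)) := by fun_prop
  have hnn : 0 ≤ᵐ[ν] fun u => exp (-l * (u - a)) := ae_of_all _ fun u => (exp_pos _).le
  have hlog_int : IntegrableOn (fun t => C / l * -log t) (Ioc 0 1) :=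
    (intervalIntegrable_iff_integrableOn_Ioc_of_le zero_le_one).1
      (intervalIntegral.intervalIntegrable_log'.neg.const_mul _)
  have hlog_nn : 0 ≤ᵐ[volume.restrict (Ioc 0 1)] fun t => C / l * -log t :=
    (ae_restrict_iff' measurableSet_Ioc).2 <| ae_of_all _ fun t ht =>
      mul_nonneg (by positivity) (neg_nonneg.2 (log_nonpos ht.1.le ht.2))
  rw [integral_eq_lintegral_of_nonneg_ae hnn hcont.aestronglyMeasurable,
    lintegral_eq_lintegral_meas_lt ν hnn hcont.aemeasurable]
  refine ENNReal.toReal_le_of_le_ofReal (by positivity) ?_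
  calc ∫⁻ t in Ioi 0, ν {u | t < exp (-l * (u - a))}
      ≤ ∫⁻ t in Ioi 0, ENNReal.ofReal (C / l * -log t) := by
        refine setLIntegral_mono' measurableSet_Ioi fun t (ht : 0 < t) => ?_
        have hlevel : {u | t < exp (-l * (u - a))} = Iio (a + -log t / l) := by
          ext u
          rw [mem_ofPred_eq, mem_Iio, ← log_lt_iff_lt_exp ht, ← sub_lt_iff_lt_add',
            lt_div_iff₀ hl]
          constructor <;> intro <;> linarith
        rw [hlevel, div_mul_eq_mul_div, mul_div_assoc]
        exact measure_Iio_add_le_ofReal hν h _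
    _ = ∫⁻ t in Ioc 0 1, ENNReal.ofReal (C / l * -log t) := by
        rw [← Ioc_union_Ioi_eq_Ioi zero_le_one, lintegral_union measurableSet_Ioi
          Ioc_disjoint_Ioi_same, setLIntegral_congr_fun measurableSet_Ioi
          (g := fun _ => 0) fun t (ht : 1 < t) => ENNReal.ofReal_of_nonpos
          (mul_nonpos_of_nonneg_of_nonpos (by positivity) (neg_nonpos.2 (log_pos ht).le))]
        simp
    _ = ENNReal.ofReal (C / l) := by
        rw [← ofReal_integral_eq_lintegral_ofReal hlog_int hlog_nn,
          ← intervalIntegral.integral_of_le zero_le_one, intervalIntegral.integral_const_mul,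
          intervalIntegral.integral_neg, integral_log]
        simp

lemma integrable_exp_neg_mul_sub (hν : ν (Iic a) = 0) (hl : 0 ≤ l) :
    Integrable (fun u => exp (-l * (u - a))) ν := by
  have hae : ∀ᵐ u ∂ν, a < u := by
    filter_upwards [measure_eq_zero_iff_ae_notMem.1 hν] with u hu
    exact not_le.1 hu
  refine (integrable_const 1).mono' (by fun_prop : Continuous _).aestronglyMeasurable ?_
  filter_upwards [hae] with u hu
  rw [norm_of_nonneg (exp_pos _).le, exp_le_one_iff]
  nlinarith

lemma measure_Ioc_mul_exp_le_integral (hν : ν (Iic a) = 0) (hl : 0 ≤ l) (s : ℝ) :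
    (ν (Ioc a s)).toReal * exp (-l * (s - a)) ≤ ∫ u, exp (-l * (u - a)) ∂ν := by
  have hint := integrable_exp_neg_mul_sub hν hl
  calc (ν (Ioc a s)).toReal * exp (-l * (s - a))
      = ∫ _ in Ioc a s, exp (-l * (s - a)) ∂ν := by rw [setIntegral_const, smul_eq_mul]; rfl
    _ ≤ ∫ u in Ioc a s, exp (-l * (u - a)) ∂ν :=
        setIntegral_mono_on (integrableOn_const (measure_ne_top _ _)) hint.integrableOn
          measurableSet_Ioc fun u hu => exp_le_exp.2 (by nlinarith [hu.2])
    _ ≤ ∫ u, exp (-l * (u - a)) ∂ν :=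
        setIntegral_le_integral hint (ae_of_all _ fun u => (exp_pos _).le)

lemma exists_nat_one_le_mul_log_le_two {δ : ℝ} (hδ : 0 < δ) (hδ1 : δ ≤ 1) :
    ∃ n : ℕ, 2 ≤ n ∧ 1 ≤ δ * log n ∧ δ * log n ≤ 2 := by
  set x := exp (1 / δ)
  have hx : exp 1 ≤ x := exp_le_exp.2 (by rw [le_div_iff₀ hδ]; linarith)
  have hx_le : x ≤ ⌈x⌉₊ := Nat.le_ceil x
  have hceil_le : (⌈x⌉₊ : ℝ) ≤ exp (1 + 1 / δ) := by
    rw [exp_add]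
    nlinarith [Nat.ceil_lt_add_one (exp_pos (1 / δ)).le, exp_one_gt_d9]
  have hpos : (0 : ℝ) < ⌈x⌉₊ := (exp_pos _).trans_le hx_le
  have hlog_ge : 1 / δ ≤ log ⌈x⌉₊ := (le_log_iff_exp_le hpos).2 hx_le
  have hlog_le : log ⌈x⌉₊ ≤ 1 + 1 / δ := (log_le_iff_le_exp hpos).2 hceil_le
  refine ⟨⌈x⌉₊, ?_, ?_, ?_⟩
  · have : (2 : ℝ) ≤ ⌈x⌉₊ := by linarith [exp_one_gt_d9]
    exact_mod_cast this
  · rw [div_le_iff₀ hδ] at hlog_ge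
    linarith
  · calc δ * log ⌈x⌉₊ ≤ δ * (1 + 1 / δ) := by gcongr
      _ = δ + 1 := by field_simp
      _ ≤ 2 := by linarith

lemma measure_Ioc_le_of_integral_le (hν : ν (Iic a) = 0) (hC : 0 ≤ C)
    (h : ∀ n : ℕ, 2 ≤ n → ∫ u, exp (-log n * (u - a)) ∂ν ≤ C / log n)
    {s : ℝ} (has : a < s) (hs : s ≤ a + 1) :
    (ν (Ioc a s)).toReal ≤ C * exp 2 * (s - a) := by
  obtain ⟨n, hn, hone_le, hle_two⟩ :=
    exists_nat_one_le_mul_log_le_two (sub_pos.2 has) (by linarith)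
  set L := log n
  have hL : 0 < L := log_pos (by exact_mod_cast hn)
  have hmass := (measure_Ioc_mul_exp_le_integral hν hL.le s).trans (h n hn)
  calc (ν (Ioc a s)).toReal
      = (ν (Ioc a s)).toReal * exp (-L * (s - a)) * exp ((s - a) * L) := by
        rw [mul_assoc, ← exp_add, show -L * (s - a) + (s - a) * L = 0 by ring, exp_zero, mul_one]
    _ ≤ C / L * exp ((s - a) * L) := by gcongr
    _ ≤ C * (s - a) * exp 2 := by
        gcongr
        rw [div_le_iff₀ hL]
        nlinarith
    _ = C * exp 2 * (s - a) := by ring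

lemma exists_measure_Ioc_le_of_integral_le (hν : ν (Iic a) = 0) (hC : 0 < C)
    (h : ∀ n : ℕ, 2 ≤ n → ∫ u, exp (-log n * (u - a)) ∂ν ≤ C / log n) :
    ∃ C' > 0, ∀ s, a < s → (ν (Ioc a s)).toReal ≤ C' * (s - a) := by
  set M := (ν univ).toReal
  have hM : 0 ≤ M := ENNReal.toReal_nonneg
  refine ⟨C * exp 2 + M, by positivity, fun s has => ?_⟩
  rcases le_or_gt s (a + 1) with hs | hs
  · calc (ν (Ioc a s)).toReal ≤ C * exp 2 * (s - a) :=
          measure_Ioc_le_of_integral_le hν hC.le h has hs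
      _ ≤ (C * exp 2 + M) * (s - a) := by gcongr; linarith
  · calc (ν (Ioc a s)).toReal ≤ M :=
          ENNReal.toReal_mono (measure_ne_top _ _) (measure_mono (subset_univ _))
      _ ≤ M * (s - a) := le_mul_of_one_le_right hM (by linarith)
      _ ≤ (C * exp 2 + M) * (s - a) := by gcongr; exact le_add_of_nonneg_left (by positivity)

theorem stmt5 (ν : Measure ℝ) [IsFiniteMeasure ν]
    (hν : ν (Set.Iic (1 / 2 : ℝ)) = 0)
    (α : ℕ → ℝ)
    (hα : ∀ n : ℕ, 1 ≤ n → α n = ∫ s, (n : ℝ) ^ (-s) ∂ν) :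
    (∃ C > 0, ∀ s : ℝ, 1 / 2 < s →
        (ν (Set.Ioc (1 / 2 : ℝ) s)).toReal ≤ C * (s - 1 / 2)) ↔
      (∃ C' > 0, ∀ n : ℕ, 2 ≤ n →
        α n ≤ C' / (Real.sqrt n * Real.log n)) := by
  have hα_le_iff : ∀ n : ℕ, 2 ≤ n → ∀ B, α n ≤ B / (√n * log n) ↔
      ∫ s, exp (-log n * (s - 1 / 2)) ∂ν ≤ B / log n := fun n hn B => by
    rw [hα n (by omega)]
    exact integral_rpow_neg_le_div_iff (by exact_mod_cast hn) B
  constructor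
  · rintro ⟨C, hC, h⟩
    exact ⟨C, hC, fun n hn => (hα_le_iff n hn C).2 <|
      integral_exp_neg_mul_sub_le hν hC.le h (log_pos (by exact_mod_cast hn))⟩
  · rintro ⟨C', hC', h⟩
    exact exists_measure_Ioc_le_of_integral_le hν hC' fun n hn => (hα_le_iff n hn C').1 (h n hn)
end

section
/- Let [·,·] be a Helson form on ℂ[z_1, z_2, …] of finite rank. Then ∑_{n,m≥1} [z^{κ(nm)}, 1] f_n \overline{f_m} ≥ 0 for every finitely supported complex sequence (f_n) if and only if there exist finitely many points λ^{(ℓ)} ∈ ℝ^∞ (viewed inside ℂ^∞) and positive real numbers c^{(ℓ)} such that [f, g] = ∑_ℓ c^{(ℓ)} f(λ^{(ℓ)}) g(λ^{(ℓ)}) for all polynomials f, g. -/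
open Finset
open scoped BigOperators ComplexOrder

/-- The kernel ideal `{f : [f,g] = 0 ∀ g}` of a bilinear form, as a subspace. -/
noncomputable def kerForm (B : MvPolynomial ℕ ℂ →ₗ[ℂ] MvPolynomial ℕ ℂ →ₗ[ℂ] ℂ) :
    Submodule ℂ (MvPolynomial ℕ ℂ) :=
  ⨅ g : MvPolynomial ℕ ℂ, LinearMap.ker (B.flip g)

/-- The monomial `z^{κ(n)}`, where `n = ∏_j p_j^{κ_j}` is the prime
factorization of `n` and the variable `X j` corresponds to the `j`-th prime. -/
noncomputable def monOf (n : ℕ) : MvPolynomial ℕ ℂ :=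
  n.factorization.prod fun p e => MvPolynomial.X (Nat.count Nat.Prime p) ^ e


/-!
Write `Λ p = [p, 1]` and let `p̄` conjugate the coefficients of `p`. The Hankel sum of `f` is
`Λ (p * p̄)` for `p = ∑ fₙ z^{κ(n)}`, and every polynomial has this form, so the positivity
condition says that `Λ` is a positive functional. Then `⟨p, q⟩ = Λ (p * q̄)` is a semi-inner
product whose null space, by Cauchy–Schwarz, is the kernel ideal `J` of the form, and `J` is
radical. The finite-dimensional reduced algebra `ℂ[z] ⧸ J` is `ℂⁿ`, i.e. `J` is the ideal of
finitely many points and `Λ = ∑ cₗ δ_{λₗ}`. Multiplication by `zⱼ` is self-adjoint for `⟨·,·⟩`,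
so the points are real, and then `cₗ = ⟨eₗ, eₗ⟩ > 0` for the polynomials `eₗ` interpolating
the indicator of `λₗ`. Conversely, such a representation gives `Λ (p * p̄) = ∑ cₗ |p(λₗ)|²`.
-/

open MvPolynomial

lemma monOf_eq_monomial (n : ℕ) :
    monOf n = monomial (n.factorization.mapDomain (Nat.count Nat.Prime)) 1 := by
  rw [monomial_eq, map_one, one_mul,
    Finsupp.prod_mapDomain_index (fun _ => pow_zero _) (fun _ _ _ => pow_add _ _ _)]
  rfl

lemma monOf_mul {n m : ℕ} (hn : n ≠ 0) (hm : m ≠ 0) : monOf (n * m) = monOf n * monOf m := by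
  simp only [monOf_eq_monomial, Nat.factorization_mul hn hm, Finsupp.mapDomain_add,
    monomial_mul, mul_one]

lemma exists_monOf_eq_monomial (μ : ℕ →₀ ℕ) : ∃ n ≠ 0, monOf n = monomial μ 1 := by
  have hprime : ∀ p ∈ (μ.mapDomain (Nat.nth Nat.Prime)).support, p.Prime := fun p hp => by
    obtain ⟨j, -, rfl⟩ := Finset.mem_image.1 (Finsupp.mapDomain_support hp)
    exact Nat.prime_nth_prime j
  refine ⟨(μ.mapDomain (Nat.nth Nat.Prime)).prod (· ^ ·),
    Finset.prod_ne_zero_iff.2 fun p hp => pow_ne_zero _ (hprime p hp).ne_zero, ?_⟩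
  have hcount : Nat.count Nat.Prime ∘ Nat.nth Nat.Prime = id :=
    funext (Nat.count_nth_of_infinite Nat.infinite_setOfPred_prime)
  rw [monOf_eq_monomial, Nat.prod_pow_factorization_eq_self hprime, ← Finsupp.mapDomain_comp,
    hcount, Finsupp.mapDomain_id]

variable {σ : Type*}

noncomputable def conjCoeffs : MvPolynomial σ ℂ →+* MvPolynomial σ ℂ :=
  map (starRingEnd ℂ)

@[simp] lemma conjCoeffs_C (a : ℂ) : conjCoeffs (C a : MvPolynomial σ ℂ) = C (starRingEnd ℂ a) :=
  map_C _ _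

@[simp] lemma conjCoeffs_X (j : σ) : conjCoeffs (X j : MvPolynomial σ ℂ) = X j :=
  map_X _ _

@[simp] lemma conjCoeffs_conjCoeffs (p : MvPolynomial σ ℂ) : conjCoeffs (conjCoeffs p) = p := by
  rw [conjCoeffs, MvPolynomial.map_map, RingHomCompTriple.comp_eq, MvPolynomial.map_id]

lemma eval_conjCoeffs {x : σ → ℂ} (hx : ∀ j, starRingEnd ℂ (x j) = x j)
    (p : MvPolynomial σ ℂ) : eval x (conjCoeffs p) = starRingEnd ℂ (eval x p) := by
  induction p using MvPolynomial.induction_on with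
  | C a => simp
  | add p q hp hq => simp [hp, hq]
  | mul_X p j hp => simp [hp, hx]

lemma conjCoeffs_monOf (n : ℕ) : conjCoeffs (monOf n) = monOf n := by
  rw [monOf_eq_monomial, conjCoeffs, map_monomial, map_one]

lemma sum_monOf_mul_eq_apply_mul_conjCoeffs (Λ : MvPolynomial ℕ ℂ →ₗ[ℂ] ℂ) (f : ℕ →₀ ℂ)
    (hf : f 0 = 0) :
    ∑ n ∈ f.support, ∑ m ∈ f.support, Λ (monOf (n * m)) * f n * starRingEnd ℂ (f m) =
      Λ (Finsupp.linearCombination ℂ monOf f *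
        conjCoeffs (Finsupp.linearCombination ℂ monOf f)) := by
  have hne : ∀ n ∈ f.support, n ≠ 0 := fun n hn h => Finsupp.mem_support_iff.1 hn (h ▸ hf)
  simp only [Finsupp.linearCombination_apply, Finsupp.sum, map_sum, smul_eq_C_mul, map_mul,
    conjCoeffs_C, conjCoeffs_monOf, Finset.sum_mul_sum]
  refine Finset.sum_congr rfl fun n hn => Finset.sum_congr rfl fun m hm => ?_
  rw [monOf_mul (hne n hn) (hne m hm), ← smul_eq_C_mul, ← smul_eq_C_mul, smul_mul_smul_comm,
    map_smul, smul_eq_mul]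
  ring

lemma exists_linearCombination_monOf_eq (p : MvPolynomial ℕ ℂ) :
    ∃ f : ℕ →₀ ℂ, f 0 = 0 ∧ Finsupp.linearCombination ℂ monOf f = p := by
  choose n hn0 hn using exists_monOf_eq_monomial
  refine ⟨∑ μ ∈ p.support, Finsupp.single (n μ) (coeff μ p), ?_, ?_⟩
  · simp [(hn0 _).symm]
  · conv_rhs => rw [← p.support_sum_monomial_coeff]
    simp [map_sum, hn, smul_monomial]

def IsPositiveFunctional (Λ : MvPolynomial σ ℂ →ₗ[ℂ] ℂ) : Prop :=
  ∀ p, 0 ≤ Λ (p * conjCoeffs p)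

lemma sum_monOf_mul_nonneg_iff (Λ : MvPolynomial ℕ ℂ →ₗ[ℂ] ℂ) :
    (∀ f : ℕ →₀ ℂ, f 0 = 0 →
        0 ≤ ∑ n ∈ f.support, ∑ m ∈ f.support, Λ (monOf (n * m)) * f n * starRingEnd ℂ (f m)) ↔
      IsPositiveFunctional Λ := by
  constructor
  · intro h p
    obtain ⟨f, hf0, rfl⟩ := exists_linearCombination_monOf_eq p
    exact sum_monOf_mul_eq_apply_mul_conjCoeffs Λ f hf0 ▸ h f hf0
  · intro h f hf0
    exact (sum_monOf_mul_eq_apply_mul_conjCoeffs Λ f hf0).symm ▸ h _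

def nullIdeal (Λ : MvPolynomial σ ℂ →ₗ[ℂ] ℂ) : Ideal (MvPolynomial σ ℂ) where
  carrier := {p | ∀ q, Λ (p * q) = 0}
  add_mem' hp hq r := by simp [add_mul, hp r, hq r]
  zero_mem' r := by simp
  smul_mem' c p hp r := by simpa [mul_assoc, mul_left_comm] using hp (c * r)

lemma mem_nullIdeal {Λ : MvPolynomial σ ℂ →ₗ[ℂ] ℂ} {p : MvPolynomial σ ℂ} :
    p ∈ nullIdeal Λ ↔ ∀ q, Λ (p * q) = 0 :=
  Iff.rfl

lemma apply_C_mul (Λ : MvPolynomial σ ℂ →ₗ[ℂ] ℂ) (a : ℂ) (p : MvPolynomial σ ℂ) :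
    Λ (C a * p) = a * Λ p := by
  rw [← smul_eq_C_mul, map_smul, smul_eq_mul]

lemma apply_add_mul_conjCoeffs (Λ : MvPolynomial σ ℂ →ₗ[ℂ] ℂ) (t : ℂ) (p q : MvPolynomial σ ℂ) :
    Λ ((C t * p + q) * conjCoeffs (C t * p + q)) =
      t * starRingEnd ℂ t * Λ (p * conjCoeffs p) + t * Λ (p * conjCoeffs q) +
        starRingEnd ℂ t * Λ (q * conjCoeffs p) + Λ (q * conjCoeffs q) := by
  have : (C t * p + q) * conjCoeffs (C t * p + q) =
      C (t * starRingEnd ℂ t) * (p * conjCoeffs p) + C t * (p * conjCoeffs q) +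
        C (starRingEnd ℂ t) * (q * conjCoeffs p) + q * conjCoeffs q := by
    simp only [map_add, map_mul, conjCoeffs_C]
    ring
  rw [this]
  simp only [map_add, apply_C_mul]

namespace IsPositiveFunctional

variable {Λ : MvPolynomial σ ℂ →ₗ[ℂ] ℂ}

lemma im_eq_zero (hΛ : IsPositiveFunctional Λ) (p : MvPolynomial σ ℂ) :
    (Λ (p * conjCoeffs p)).im = 0 :=
  (Complex.nonneg_iff.1 (hΛ p)).2.symm

lemma conj_symm (hΛ : IsPositiveFunctional Λ) (p q : MvPolynomial σ ℂ) :
    Λ (q * conjCoeffs p) = starRingEnd ℂ (Λ (p * conjCoeffs q)) := by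
  have h1 := hΛ.im_eq_zero (C 1 * p + q)
  have hI := hΛ.im_eq_zero (C Complex.I * p + q)
  rw [apply_add_mul_conjCoeffs] at h1 hI
  simp [Complex.ext_iff, hΛ.im_eq_zero p, hΛ.im_eq_zero q] at h1 hI ⊢
  constructor <;> linarith

lemma apply_mul_eq_zero (hΛ : IsPositiveFunctional Λ) {p : MvPolynomial σ ℂ}
    (hp : Λ (p * conjCoeffs p) = 0) (q : MvPolynomial σ ℂ) : Λ (p * q) = 0 := by
  set q' := conjCoeffs q
  set u := Λ (p * q)
  set b := Λ (q' * conjCoeffs q')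
  have hu : Λ (p * conjCoeffs q') = u := by rw [conjCoeffs_conjCoeffs]
  -- With `t = -s ū`, positivity at `t p + q'` reads `0 ≤ b - 2 s |u|²` for every real `s`.
  by_contra hu0
  have hN : 0 < Complex.normSq u := Complex.normSq_pos.2 hu0
  set s := (b.re + 1) / Complex.normSq u
  have htu : -(s : ℂ) * starRingEnd ℂ u * u = -(s * Complex.normSq u : ℝ) := by
    rw [mul_assoc, ← Complex.normSq_eq_conj_mul_self]
    push_cast
    ring
  have hpos := Complex.nonneg_iff.1 (hΛ (C (-(s : ℂ) * starRingEnd ℂ u) * p + q'))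
  rw [apply_add_mul_conjCoeffs, hp, hΛ.conj_symm p q', hu, ← map_mul, htu] at hpos
  have hb : 0 ≤ b.re := (Complex.nonneg_iff.1 (hΛ q')).1
  have hsN : s * Complex.normSq u = b.re + 1 := div_mul_cancel₀ _ hN.ne'
  simp [hsN] at hpos
  linarith [hpos.1]

lemma mem_nullIdeal_iff (hΛ : IsPositiveFunctional Λ) {p : MvPolynomial σ ℂ} :
    p ∈ nullIdeal Λ ↔ Λ (p * conjCoeffs p) = 0 :=
  ⟨fun h => h _, hΛ.apply_mul_eq_zero⟩

lemma isRadical_nullIdeal (hΛ : IsPositiveFunctional Λ) : (nullIdeal Λ).IsRadical := by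
  refine (Ideal.isRadical_iff_pow_one_lt 2 one_lt_two).2 fun p hp => ?_
  have hpp : p * conjCoeffs p ∈ nullIdeal Λ := hΛ.mem_nullIdeal_iff.2 <| by
    rw [map_mul conjCoeffs, conjCoeffs_conjCoeffs, show p * conjCoeffs p * (conjCoeffs p * p) =
      p ^ 2 * conjCoeffs p ^ 2 by ring]
    exact hp _
  exact hΛ.mem_nullIdeal_iff.2 (by simpa using hpp 1)

lemma conj_eq_of_mul_sub_mem (hΛ : IsPositiveFunctional Λ) {p q : MvPolynomial σ ℂ} {μ : ℂ}
    (hq : conjCoeffs q = q) (hp : p ∉ nullIdeal Λ) (h : q * p - C μ * p ∈ nullIdeal Λ) :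
    starRingEnd ℂ μ = μ := by
  have hpp : Λ (p * conjCoeffs p) ≠ 0 := mt hΛ.mem_nullIdeal_iff.2 hp
  have hreal : starRingEnd ℂ (Λ (p * conjCoeffs p)) = Λ (p * conjCoeffs p) :=
    (hΛ.conj_symm p p).symm
  have heig : Λ (q * p * conjCoeffs p) = μ * Λ (p * conjCoeffs p) := by
    have := h (conjCoeffs p)
    rwa [sub_mul, map_sub, mul_assoc (C μ), apply_C_mul, sub_eq_zero] at this
  have hsymm : Λ (q * p * conjCoeffs p) = starRingEnd ℂ (Λ (q * p * conjCoeffs p)) := by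
    rw [← hΛ.conj_symm, map_mul conjCoeffs, hq, mul_left_comm, mul_assoc]
  rw [heig, map_mul (starRingEnd ℂ), hreal] at hsymm
  exact (mul_right_cancel₀ hpp hsymm).symm

end IsPositiveFunctional

theorem exists_algEquiv_pi_of_isReduced (K A : Type*) [Field K] [IsAlgClosed K] [CommRing A]
    [Algebra K A] [FiniteDimensional K A] [IsReduced A] :
    ∃ n : ℕ, Nonempty (A ≃ₐ[K] (Fin n → K)) := by
  have := IsArtinianRing.of_finite K A
  let _ (I : MaximalSpectrum A) : Field (A ⧸ I.asIdeal) := Ideal.Quotient.field I.asIdeal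
  let e (I : MaximalSpectrum A) : (A ⧸ I.asIdeal) ≃ₐ[K] K :=
    (AlgEquiv.ofBijective (Algebra.ofId K _)
      IsAlgClosed.algebraMap_bijective_of_isIntegral).symm
  obtain ⟨n, ⟨f⟩⟩ := Finite.exists_equiv_fin (MaximalSpectrum A)
  exact ⟨n, ⟨((IsArtinianRing.equivPi A).restrictScalars K).trans <|
    (AlgEquiv.piCongrRight e).trans (AlgEquiv.piCongrLeft K (fun _ => K) f)⟩⟩

theorem exists_points_of_isRadical {K : Type*} [Field K] [IsAlgClosed K]
    (J : Ideal (MvPolynomial σ K)) (hJ : J.IsRadical)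
    [FiniteDimensional K (MvPolynomial σ K ⧸ J)] :
    ∃ (n : ℕ) (z : Fin n → σ → K), (∀ p, p ∈ J ↔ ∀ i, eval (z i) p = 0) ∧
      ∀ v : Fin n → K, ∃ p, ∀ i, eval (z i) p = v i := by
  have := (Ideal.isRadical_iff_quotient_reduced J).1 hJ
  obtain ⟨n, ⟨e⟩⟩ := exists_algEquiv_pi_of_isReduced K (MvPolynomial σ K ⧸ J)
  let φ := e.toAlgHom.comp (Ideal.Quotient.mkₐ K J)
  have hφ (p : MvPolynomial σ K) (i : Fin n) : φ p i = eval (fun j => φ (X j) i) p := by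
    rw [← coe_aeval_eq_eval]
    exact DFunLike.congr_fun (aeval_unique ((Pi.evalAlgHom K (fun _ => K) i).comp φ)) p
  refine ⟨n, fun i j => φ (X j) i, fun p => ?_, fun v => ?_⟩
  · rw [← Ideal.Quotient.eq_zero_iff_mem, ← EmbeddingLike.map_eq_zero_iff (f := e),
      _root_.funext_iff]
    exact forall_congr' fun i => by rw [← hφ]; rfl
  · obtain ⟨p, hp⟩ := Ideal.Quotient.mk_surjective (e.symm v)
    refine ⟨p, fun i => ?_⟩
    rw [← hφ]
    change e (Ideal.Quotient.mk J p) i = v i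
    rw [hp, e.apply_symm_apply]

theorem IsPositiveFunctional.exists_eq_sum_eval {Λ : MvPolynomial σ ℂ →ₗ[ℂ] ℂ}
    (hΛ : IsPositiveFunctional Λ) [FiniteDimensional ℂ (MvPolynomial σ ℂ ⧸ nullIdeal Λ)] :
    ∃ (n : ℕ) (c : Fin n → ℝ) (lam : Fin n → σ → ℝ), (∀ i, 0 < c i) ∧
      ∀ p, Λ p = ∑ i, (c i : ℂ) * eval (fun j => (lam i j : ℂ)) p := by
  obtain ⟨n, z, hJ, hsurj⟩ := exists_points_of_isRadical _ hΛ.isRadical_nullIdeal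
  choose e he using fun k => hsurj (Pi.single k 1)
  have hsum (p : MvPolynomial σ ℂ) : Λ p = ∑ i, Λ (e i) * eval (z i) p := by
    have : p - ∑ i, C (eval (z i) p) * e i ∈ nullIdeal Λ :=
      (hJ _).2 fun k => by simp [he, Pi.single_apply]
    have h1 := this 1
    rw [mul_one, map_sub, sub_eq_zero, map_sum] at h1
    exact h1.trans (Finset.sum_congr rfl fun i _ => by rw [apply_C_mul, mul_comm])
  have he_notMem (k : Fin n) : e k ∉ nullIdeal Λ := fun h => by simpa [he] using (hJ _).1 h k
  have hz (i : Fin n) (j : σ) : starRingEnd ℂ (z i j) = z i j := by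
    refine hΛ.conj_eq_of_mul_sub_mem (conjCoeffs_X j) (he_notMem i) ((hJ _).2 fun k => ?_)
    rw [map_sub, map_mul, map_mul, eval_X, eval_C, he, Pi.single_apply]
    split_ifs with hki <;> simp [hki]
  have hc (i : Fin n) : 0 < Λ (e i) := by
    have h1 : Λ (e i * conjCoeffs (e i)) = Λ (e i) := by
      rw [hsum]
      simp [eval_conjCoeffs (hz _), he, Pi.single_apply]
    refine lt_of_le_of_ne (h1 ▸ hΛ (e i)) fun h => he_notMem i ?_
    exact hΛ.mem_nullIdeal_iff.2 (h1.trans h.symm)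
  refine ⟨n, fun i => (Λ (e i)).re, fun i j => (z i j).re, fun i => (Complex.pos_iff.1 (hc i)).1,
    fun p => ?_⟩
  have hz' (i : Fin n) : (fun j => ((z i j).re : ℂ)) = z i :=
    funext fun j => Complex.conj_eq_iff_re.1 (hz i j)
  simp only [hsum p, hz', ← Complex.eq_re_of_ofReal_le (hc _).le]

lemma IsPositiveFunctional.of_eq_sum_eval {Λ : MvPolynomial σ ℂ →ₗ[ℂ] ℂ} {n : ℕ}
    (c : Fin n → ℝ) (lam : Fin n → σ → ℝ) (hc : ∀ i, 0 ≤ c i)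
    (hΛ : ∀ p, Λ p = ∑ i, (c i : ℂ) * eval (fun j => (lam i j : ℂ)) p) :
    IsPositiveFunctional Λ := fun p => by
  rw [hΛ]
  refine Finset.sum_nonneg fun i _ => ?_
  rw [map_mul, eval_conjCoeffs (fun j => Complex.conj_ofReal _), Complex.mul_conj,
    ← Complex.ofReal_mul, Complex.zero_le_real]
  exact mul_nonneg (hc i) (Complex.normSq_nonneg _)

lemma finiteDimensional_quotient_nullIdeal_flip
    {B : MvPolynomial ℕ ℂ →ₗ[ℂ] MvPolynomial ℕ ℂ →ₗ[ℂ] ℂ} (hmult : ∀ f g, B f g = B (f * g) 1)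
    [FiniteDimensional ℂ (MvPolynomial ℕ ℂ ⧸ kerForm B)] :
    FiniteDimensional ℂ (MvPolynomial ℕ ℂ ⧸ nullIdeal (B.flip 1)) := by
  have h : (nullIdeal (B.flip 1)).restrictScalars ℂ = kerForm B := by
    ext p
    simp [kerForm, Submodule.mem_iInf, mem_nullIdeal, ← hmult]
  exact Module.Finite.equiv ((Submodule.quotEquivOfEq _ _ h.symm).trans
    (Submodule.Quotient.restrictScalarsEquiv ℂ _))

theorem stmt9 (B : MvPolynomial ℕ ℂ →ₗ[ℂ] MvPolynomial ℕ ℂ →ₗ[ℂ] ℂ)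
    (hmult : ∀ f g, B f g = B (f * g) 1)
    (hfr : FiniteDimensional ℂ (MvPolynomial ℕ ℂ ⧸ kerForm B)) :
    (∀ f : ℕ →₀ ℂ, f 0 = 0 →
        0 ≤ ∑ n ∈ f.support, ∑ m ∈ f.support,
              B (monOf (n * m)) 1 * f n * (starRingEnd ℂ) (f m)) ↔
      ∃ (L : ℕ) (c : Fin L → ℝ) (lam : Fin L → ℕ → ℝ),
        (∀ ℓ, 0 < c ℓ) ∧
        (∀ f g, B f g =
          ∑ ℓ, (c ℓ : ℂ) * MvPolynomial.eval (fun j => (lam ℓ j : ℂ)) f *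
            MvPolynomial.eval (fun j => (lam ℓ j : ℂ)) g) := by
  have := finiteDimensional_quotient_nullIdeal_flip hmult
  refine (sum_monOf_mul_nonneg_iff (B.flip 1)).trans ⟨fun hΛ => ?_, fun ⟨L, c, lam, hc, hB⟩ => ?_⟩
  · obtain ⟨L, c, lam, hc, hΛ⟩ := hΛ.exists_eq_sum_eval
    refine ⟨L, c, lam, hc, fun f g => ?_⟩
    rw [hmult, ← LinearMap.flip_apply, hΛ]
    simp only [map_mul, mul_assoc]
  · exact .of_eq_sum_eval c lam (fun ℓ => (hc ℓ).le) fun p => by simpa using hB p 1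
end

section
/- Let I be an ideal of ℂ[z_1, z_2, …] (the polynomial ring over ℂ in countably many variables) which has finite codimension as a ℂ-vector subspace. Then there exist d ∈ ℕ and a surjective ring homomorphism ω : ℂ[z_1, z_2, …] → ℂ[z_1, …, z_d] such that: (i) ker ω ⊆ I; (ii) ω(i_d(g)) = g for every g ∈ ℂ[z_1, …, z_d]; (iii) i_d(ω(f)) − f ∈ I for every f ∈ ℂ[z_1, z_2, …]; and (iv) the ideal ω(I) has finite codimension as a ℂ-vector subspace of ℂ[z_1, …, z_d]. -/
open scoped BigOperators

open MvPolynomial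

lemma exists_rename_of_vars_lt {d : ℕ} (p : MvPolynomial ℕ ℂ)
    (hp : (↑p.vars : Set ℕ) ⊆ Set.range (Fin.val : Fin d → ℕ)) :
    ∃ q : MvPolynomial (Fin d) ℂ, rename (Fin.val : Fin d → ℕ) q = p := by
  have hmem : p ∈ supported ℂ (Set.range (Fin.val : Fin d → ℕ)) :=
    (mem_supported).2 hp
  rw [supported_eq_range_rename, AlgHom.mem_range] at hmem
  obtain ⟨r, hr⟩ := hmem
  set e : Fin d ≃ Set.range (Fin.val : Fin d → ℕ) :=
    Equiv.ofInjective _ (Fin.val_injective)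
  refine ⟨rename e.symm r, ?_⟩
  rw [← hr, rename_rename]
  have hco : (Fin.val : Fin d → ℕ) ∘ e.symm = (Subtype.val : Set.range (Fin.val : Fin d → ℕ) → ℕ) := by
    funext x
    calc Fin.val (e.symm x) = ((e (e.symm x) : Set.range (Fin.val : Fin d → ℕ)) : ℕ) := rfl
      _ = (x : ℕ) := by rw [e.apply_symm_apply]
  rw [hco]

theorem stmt10 (I : Ideal (MvPolynomial ℕ ℂ))
    (hI : FiniteDimensional ℂ (MvPolynomial ℕ ℂ ⧸ I)) :
    ∃ (d : ℕ) (ω : MvPolynomial ℕ ℂ →+* MvPolynomial (Fin d) ℂ),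
      Function.Surjective ω ∧
      RingHom.ker ω ≤ I ∧
      (∀ g : MvPolynomial (Fin d) ℂ,
        ω (MvPolynomial.rename (Fin.val : Fin d → ℕ) g) = g) ∧
      (∀ f : MvPolynomial ℕ ℂ,
        MvPolynomial.rename (Fin.val : Fin d → ℕ) (ω f) - f ∈ I) ∧
      FiniteDimensional ℂ (MvPolynomial (Fin d) ℂ ⧸ I.map ω) := by
  classical
  -- a finite spanning set of the quotient
  obtain ⟨S, hS⟩ := (Module.finite_def.mp hI)
  have hmk : Function.Surjective (Ideal.Quotient.mk I) := Ideal.Quotient.mk_surjective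
  set F : MvPolynomial ℕ ℂ ⧸ I → MvPolynomial ℕ ℂ := Function.surjInv hmk
  have hF : ∀ x, Ideal.Quotient.mk I (F x) = x := fun x => Function.surjInv_eq hmk x
  set t : Finset ℕ := S.biUnion (fun x => (F x).vars)
  set d : ℕ := t.sup id + 1
  -- ψ : MvPolynomial (Fin d) ℂ →ₐ[ℂ] quotient
  set ψ : MvPolynomial (Fin d) ℂ →ₐ[ℂ] (MvPolynomial ℕ ℂ ⧸ I) :=
    (Ideal.Quotient.mkₐ ℂ I).comp (rename (Fin.val : Fin d → ℕ)) with hψdef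
  have hψsurj : Function.Surjective ψ := by
    have hr : LinearMap.range ψ.toLinearMap = ⊤ := by
      rw [← top_le_iff, ← hS, Submodule.span_le]
      intro x hx
      have hvars : (↑(F x).vars : Set ℕ) ⊆ Set.range (Fin.val : Fin d → ℕ) := by
        intro n hn
        have hnt : n ∈ t := Finset.mem_biUnion.2 ⟨x, hx, by simpa using hn⟩
        have : n < d := Nat.lt_succ_of_le (Finset.le_sup (f := id) hnt)
        exact ⟨⟨n, this⟩, rfl⟩
      obtain ⟨q, hq⟩ := exists_rename_of_vars_lt (F x) hvars
      refine ⟨q, ?_⟩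
      show ψ q = x
      simp [hψdef, hq, hF]
    exact LinearMap.range_eq_top.mp hr
  -- the section q of the variables
  set q : ℕ → MvPolynomial (Fin d) ℂ := fun n =>
    if h : n < d then X ⟨n, h⟩ else Function.surjInv hψsurj (Ideal.Quotient.mk I (X n))
    with hqdef
  have hq : ∀ n, ψ (q n) = Ideal.Quotient.mk I (X n) := by
    intro n
    by_cases h : n < d
    · simp [hqdef, h, hψdef]
    · simp [hqdef, h, Function.surjInv_eq hψsurj]
  set ω : MvPolynomial ℕ ℂ →ₐ[ℂ] MvPolynomial (Fin d) ℂ := aeval q with hωdef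
  have key : ∀ f : MvPolynomial ℕ ℂ, ψ (ω f) = Ideal.Quotient.mk I f := by
    intro f
    have : ψ.comp ω = Ideal.Quotient.mkₐ ℂ I := by
      apply MvPolynomial.algHom_ext
      intro n
      simpa [hωdef] using hq n
    calc ψ (ω f) = (ψ.comp ω) f := rfl
      _ = Ideal.Quotient.mk I f := by rw [this]; rfl
  have hii : ∀ g : MvPolynomial (Fin d) ℂ, ω (rename (Fin.val : Fin d → ℕ) g) = g := by
    intro g
    rw [hωdef]
    show aeval q (rename (Fin.val : Fin d → ℕ) g) = g
    rw [aeval_rename]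
    have : (q ∘ (Fin.val : Fin d → ℕ)) = (X : Fin d → MvPolynomial (Fin d) ℂ) := by
      funext i
      simp [hqdef, i.isLt]
    rw [this]
    exact aeval_X_left_apply g
  refine ⟨d, ω.toRingHom, ?_, ?_, ?_, ?_, ?_⟩
  · intro g
    exact ⟨rename (Fin.val : Fin d → ℕ) g, hii g⟩
  · intro f hf
    have h0 : ω f = 0 := hf
    have := key f
    rw [h0, map_zero] at this
    exact (Ideal.Quotient.eq_zero_iff_mem).1 this.symm
  · exact hii
  · intro f
    rw [← Ideal.Quotient.eq]
    show Ideal.Quotient.mk I (rename (Fin.val : Fin d → ℕ) (ω f)) = Ideal.Quotient.mk I f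
    have h1 : Ideal.Quotient.mk I (rename (Fin.val : Fin d → ℕ) (ω f)) = ψ (ω f) := rfl
    rw [h1, key]
  · -- finite dimensionality of the target quotient
    have hle : I ≤ (Ideal.map ω.toRingHom I).comap ω := Ideal.le_comap_map
    set φ := Ideal.quotientMapₐ (Ideal.map ω.toRingHom I) ω hle with hφdef
    have hφ : Function.Surjective φ := by
      intro y
      obtain ⟨p, rfl⟩ := Ideal.Quotient.mk_surjective y
      refine ⟨Ideal.Quotient.mk I (rename (Fin.val : Fin d → ℕ) p), ?_⟩
      show Ideal.Quotient.mk (Ideal.map ω.toRingHom I) (ω (rename (Fin.val : Fin d → ℕ) p))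
          = Ideal.Quotient.mk (Ideal.map ω.toRingHom I) p
      rw [hii]
    exact Module.Finite.of_surjective φ.toLinearMap hφ
end

section
/- Let m ≥ 1 and let c : ℕ^m → ℂ satisfy ∑_{j ∈ ℕ^m} |c(j)|² < ∞. Suppose c = ∑_{ℓ=1}^L a_1^{(ℓ)} ⊗ ⋯ ⊗ a_m^{(ℓ)} for some L < ∞ and some sequences a_i^{(ℓ)} : ℕ → ℂ. Then there exist L' < ∞ and sequences c_i^{(ℓ)} ∈ ℓ²(ℕ), 1 ≤ i ≤ m, 1 ≤ ℓ ≤ L', such that c = ∑_{ℓ=1}^{L'} c_1^{(ℓ)} ⊗ ⋯ ⊗ c_m^{(ℓ)}. -/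
/-!
Fix a coordinate `i₀` and write `c j = ∑ ℓ, a ℓ i₀ (j i₀) * T ℓ j`, where `T ℓ` is the product of the
other factors and does not depend on `j i₀`. Expanding in a basis of `V = span {T ℓ}` chosen among
the `T ℓ`, the new `i₀`-factors are `g k t = φ k (c (update · i₀ t))` for the coordinate functionals
`φ k` of that basis. Point evaluations span the dual of the finite-dimensional space `V`, so each
`g k` is a finite linear combination of slices `t ↦ c (update y i₀ t)`, which are `ℓ²` because `c`
is. The other factors are unchanged, so this can be repeated coordinate by coordinate.
-/

open Submodule Set Function
open scoped ENNReal

section SpanOfEvaluations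

variable {K X Y : Type*} [Field K]

theorem Submodule.span_range_eval_comp_subtype_eq_top (V : Submodule K (Y → K))
    [FiniteDimensional K V] :
    span K (range fun y => LinearMap.proj (R := K) (φ := fun _ : Y => K) y ∘ₗ V.subtype) = ⊤ := by
  set W := span K (range fun y => LinearMap.proj (R := K) (φ := fun _ : Y => K) y ∘ₗ V.subtype)
  have hW : W.dualCoannihilator = ⊥ := by
    refine eq_bot_iff.mpr fun v hv => ?_
    rw [mem_dualCoannihilator] at hv
    exact (mem_bot K).mpr (Subtype.ext (funext fun y => hv _ (subset_span ⟨y, rfl⟩)))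
  rw [← Subspace.dualCoannihilator_dualAnnihilator_eq (W := W), hW, dualAnnihilator_bot]

theorem Module.Dual.comp_mem_span_range_eval {V : Submodule K (Y → K)} [FiniteDimensional K V]
    (F : X → V) (φ : Module.Dual K V) :
    (fun x => φ (F x)) ∈ span K (range fun y x => (F x : Y → K) y) := by
  let Φ : Module.Dual K V →ₗ[K] X → K := LinearMap.pi fun x => Module.Dual.eval K V (F x)
  have hφ := mem_map_of_mem (f := Φ)
    (V.span_range_eval_comp_subtype_eq_top ▸ mem_top (x := φ))
  rwa [map_span, ← range_comp] at hφ

theorem exists_fin_linearIndependent_span_eq {V ι : Type*} [AddCommGroup V] [Module K V]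
    [Finite ι] (v : ι → V) :
    ∃ (n : ℕ) (e : Fin n → ι),
      span K (range (v ∘ e)) = span K (range v) ∧ LinearIndependent K (v ∘ e) := by
  obtain ⟨κ, a, ha, hspan, hli⟩ := exists_linearIndependent' K v
  have : Finite κ := Finite.of_injective a ha
  let σ := (Finite.equivFin κ).symm
  refine ⟨Nat.card κ, a ∘ σ, ?_, hli.comp σ σ.injective⟩
  rw [← hspan, ← comp_assoc, EquivLike.range_comp]

theorem exists_fin_sum_mul_of_mem_span {ι : Type*} [Finite ι] (v : ι → Y → K) (F : X → Y → K)
    (hF : ∀ x, F x ∈ span K (range v)) :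
    ∃ (n : ℕ) (e : Fin n → ι) (g : Fin n → X → K),
      (∀ k, g k ∈ span K (range fun y x => F x y)) ∧ ∀ x y, F x y = ∑ k, g k x * v (e k) y := by
  obtain ⟨n, e, hspan, hli⟩ := exists_fin_linearIndependent_span_eq (K := K) v
  let b := Module.Basis.span hli
  have : FiniteDimensional K (span K (range (v ∘ e))) := b.finiteDimensional_of_finite
  let F' : X → span K (range (v ∘ e)) := fun x => ⟨F x, hspan ▸ hF x⟩
  refine ⟨n, e, fun k x => b.coord k (F' x), fun k => Module.Dual.comp_mem_span_range_eval F' _,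
    fun x y => ?_⟩
  have hb : ∀ k, (b k : Y → K) = v (e k) := fun k =>
    congrArg Subtype.val (Module.Basis.span_apply hli k)
  have hx := congrArg (fun w : span K (range (v ∘ e)) => (w : Y → K) y) (b.sum_repr (F' x))
  simp only [coe_sum, coe_smul, Finset.sum_apply, Pi.smul_apply, hb, smul_eq_mul] at hx
  exact hx.symm

end SpanOfEvaluations

section Memℓp

variable {α : Type*} {E : Type*} [NormedAddCommGroup E] {p : ℝ≥0∞}

theorem memℓp_two_iff_summable_sq {f : α → E} : Memℓp f 2 ↔ Summable fun i => ‖f i‖ ^ 2 := by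
  rw [memℓp_gen_iff (by norm_num)]
  norm_num

theorem Memℓp.comp_injective {γ : Type*} {f : α → E} (hp : 0 < p.toReal) (hf : Memℓp f p)
    {i : γ → α} (hi : Injective i) : Memℓp (f ∘ i) p :=
  (memℓp_gen_iff hp).mpr (((memℓp_gen_iff hp).mp hf).comp_injective hi)

theorem Memℓp.of_mem_span {𝕜 : Type*} [NormedRing 𝕜] [Module 𝕜 E] [IsBoundedSMul 𝕜 E]
    {s : Set (α → E)} (hs : ∀ f ∈ s, Memℓp f p) {f : α → E} (hf : f ∈ span 𝕜 s) :
    Memℓp f p := by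
  induction hf using span_induction with
  | mem f h => exact hs f h
  | zero => exact zero_memℓp
  | add f g _ _ hf hg => exact hf.add hg
  | smul c f _ hf => exact hf.const_smul c

end Memℓp

section ElementaryTensors

variable {ι β : Type*} [Fintype ι] [DecidableEq ι]

theorem Fintype.prod_update_apply {K : Type*} [CommMonoid K] (f : ι → β → K) (i₀ : ι) (h : β → K)
    (j : ι → β) :
    ∏ i, update f i₀ h i (j i) = h (j i₀) * ∏ i ∈ Finset.univ.erase i₀, f i (j i) := by
  rw [← Finset.mul_prod_erase _ _ (Finset.mem_univ i₀), update_self]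
  congr 1
  exact Finset.prod_congr rfl fun i hi => by rw [update_of_ne (Finset.ne_of_mem_erase hi)]

theorem exists_tensor_repr_update {K : Type*} [Field K] (c : (ι → β) → K) {L : ℕ}
    (a : Fin L → ι → β → K) (hrep : ∀ j, c j = ∑ ℓ, ∏ i, a ℓ i (j i)) (i₀ : ι) :
    ∃ (n : ℕ) (e : Fin n → Fin L) (g : Fin n → β → K),
      (∀ k, g k ∈ span K (range fun (j : ι → β) t => c (update j i₀ t))) ∧
      ∀ j, c j = ∑ k, ∏ i, update (a (e k)) i₀ (g k) i (j i) := by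
  let T : Fin L → (ι → β) → K := fun ℓ j => ∏ i ∈ Finset.univ.erase i₀, a ℓ i (j i)
  have hT : ∀ ℓ j t, T ℓ (update j i₀ t) = T ℓ j := fun ℓ j t =>
    Finset.prod_congr rfl fun i hi => by rw [update_of_ne (Finset.ne_of_mem_erase hi)]
  have hslice : ∀ t, (fun j => c (update j i₀ t)) = ∑ ℓ, a ℓ i₀ t • T ℓ := by
    intro t
    ext j
    rw [hrep, Finset.sum_apply]
    refine Finset.sum_congr rfl fun ℓ _ => ?_
    rw [Pi.smul_apply, smul_eq_mul, ← Finset.mul_prod_erase _ _ (Finset.mem_univ i₀), update_self]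
    exact congrArg _ (hT ℓ j t)
  obtain ⟨n, e, g, hg, hcg⟩ := exists_fin_sum_mul_of_mem_span T (fun t j => c (update j i₀ t))
    fun t => hslice t ▸ sum_mem fun ℓ _ => smul_mem _ _ (subset_span ⟨ℓ, rfl⟩)
  refine ⟨n, e, g, hg, fun j => ?_⟩
  simpa only [update_eq_self, Fintype.prod_update_apply] using hcg (j i₀) j

theorem exists_tensor_repr_memℓp_on {𝕜 : Type*} [NormedField 𝕜] {p : ℝ≥0∞} (hp : 0 < p.toReal)
    (c : (ι → β) → 𝕜) (hc : Memℓp c p) {L : ℕ} (a : Fin L → ι → β → 𝕜)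
    (hrep : ∀ j, c j = ∑ ℓ, ∏ i, a ℓ i (j i)) (s : Finset ι) :
    ∃ (L' : ℕ) (b : Fin L' → ι → β → 𝕜),
      (∀ ℓ, ∀ i ∈ s, Memℓp (b ℓ i) p) ∧ ∀ j, c j = ∑ ℓ, ∏ i, b ℓ i (j i) := by
  induction s using Finset.induction_on with
  | empty => exact ⟨L, a, by simp, hrep⟩
  | insert i₀ s _ ih =>
    obtain ⟨L₁, b, hb, hrep₁⟩ := ih
    obtain ⟨n, e, g, hg, hrep₂⟩ := exists_tensor_repr_update c b hrep₁ i₀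
    have hslice : ∀ j : ι → β, Memℓp (fun t => c (update j i₀ t)) p := fun j =>
      hc.comp_injective hp (update_injective j i₀)
    refine ⟨n, fun k => update (b (e k)) i₀ (g k), fun k i hi => ?_, hrep₂⟩
    rcases eq_or_ne i i₀ with rfl | hne
    · simpa using Memℓp.of_mem_span (by rintro _ ⟨j, rfl⟩; exact hslice j) (hg k)
    · simpa [hne] using hb (e k) i ((Finset.mem_insert.mp hi).resolve_left hne)

end ElementaryTensors

theorem stmt12_general (m : ℕ) (c : (Fin m → ℕ+) → ℂ)
    (hc2 : Summable fun j : Fin m → ℕ+ => ‖c j‖ ^ 2)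
    (L : ℕ) (a : Fin L → Fin m → ℕ+ → ℂ)
    (hrep : ∀ j : Fin m → ℕ+, c j = ∑ ℓ, ∏ i, a ℓ i (j i)) :
    ∃ (L' : ℕ) (b : Fin L' → Fin m → ℕ+ → ℂ),
      (∀ ℓ i, Summable fun n : ℕ+ => ‖b ℓ i n‖ ^ 2) ∧
      ∀ j : Fin m → ℕ+, c j = ∑ ℓ, ∏ i, b ℓ i (j i) := by
  obtain ⟨L', b, hb, hrep'⟩ := exists_tensor_repr_memℓp_on (p := 2) (by norm_num) c
    (memℓp_two_iff_summable_sq.mpr hc2) a hrep Finset.univ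
  exact ⟨L', b, fun ℓ i => memℓp_two_iff_summable_sq.mp (hb ℓ i (Finset.mem_univ i)), hrep'⟩

theorem stmt12 (m : ℕ) (hm : 1 ≤ m) (c : (Fin m → ℕ+) → ℂ)
    (hc2 : Summable fun j : Fin m → ℕ+ => ‖c j‖ ^ 2)
    (L : ℕ) (a : Fin L → Fin m → ℕ+ → ℂ)
    (hrep : ∀ j : Fin m → ℕ+, c j = ∑ ℓ, ∏ i, a ℓ i (j i)) :
    ∃ (L' : ℕ) (b : Fin L' → Fin m → ℕ+ → ℂ),
      (∀ ℓ i, Summable fun n : ℕ+ => ‖b ℓ i n‖ ^ 2) ∧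
      ∀ j : Fin m → ℕ+, c j = ∑ ℓ, ∏ i, b ℓ i (j i) :=
  stmt12_general m c hc2 L a hrep
end

section
/- Let λ ∈ ℂ^∞ = ℕ → ℂ. The evaluation functional f ↦ f(λ) on polynomials in the variables z_1, z_2, … is bounded with respect to the H²(𝕋^∞) norm — i.e. there is C > 0 with |f(λ)| ≤ C ‖f‖ for every polynomial f — if and only if |λ_j| < 1 for every j and ∑_{j=1}^∞ |λ_j|² < ∞. -/
open Finset
open scoped BigOperators

/-!
By Cauchy–Schwarz, evaluation at `λ` is bounded exactly when `∑_κ |λ^κ|² < ∞`; the test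
polynomials `∑_{κ ∈ s} conj(λ^κ) z^κ` show that this is also necessary. With `x_j = |λ_j|²`
we have `|λ^κ|² = ∏_j x_j^{κ_j}`, so the sum is formally the product `∏_j (1 - x_j)⁻¹` of
geometric series: it converges iff every `x_j < 1` and `∑_j x_j < ∞`, the partial sums being
bounded by `exp (∑_j -log (1 - x_j))`.
-/

theorem Finset.prod_sum_eq_sum_finsupp {ι α R : Type*} [Zero α] [CommSemiring R]
    (s : Finset ι) (t : ι → Finset α) (g : ι → α → R) :
    ∏ j ∈ s, ∑ k ∈ t j, g j k = ∑ κ ∈ s.finsupp t, ∏ j ∈ s, g j (κ j) := by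
  classical
  rw [Finset.prod_sum, Finset.finsupp, Finset.sum_map]
  refine Finset.sum_congr rfl fun p _ => ?_
  rw [← Finset.prod_attach s]
  refine Finset.prod_congr rfl fun j _ => ?_
  simp [Finsupp.indicator_of_mem j.2]

theorem sum_pow_le_inv_one_sub {x : ℝ} (hx0 : 0 ≤ x) (hx1 : x < 1) (t : Finset ℕ) :
    ∑ k ∈ t, x ^ k ≤ (1 - x)⁻¹ := by
  rw [← tsum_geometric_of_lt_one hx0 hx1]
  exact (summable_geometric_of_lt_one hx0 hx1).sum_le_tsum t fun k _ => pow_nonneg hx0 k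

section Summability

variable {ι : Type*} {x : ι → ℝ}

theorem sum_finsuppProd_pow_le_prod_inv_one_sub (hx0 : ∀ j, 0 ≤ x j) (hx1 : ∀ j, x j < 1)
    {s : Finset (ι →₀ ℕ)} {S : Finset ι} (hS : ∀ κ ∈ s, κ.support ⊆ S) :
    ∑ κ ∈ s, κ.prod (fun j n => x j ^ n) ≤ ∏ j ∈ S, (1 - x j)⁻¹ := by
  let t : ι → Finset ℕ := fun j => s.image (· j)
  calc ∑ κ ∈ s, κ.prod (fun j n => x j ^ n)
      = ∑ κ ∈ s, ∏ j ∈ S, x j ^ κ j :=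
        sum_congr rfl fun κ hκ => Finsupp.prod_of_support_subset κ
          (hS κ hκ) _ fun _ _ => pow_zero _
    _ ≤ ∑ κ ∈ S.finsupp t, ∏ j ∈ S, x j ^ κ j := by
        refine sum_le_sum_of_subset_of_nonneg (fun κ hκ => ?_)
          fun κ _ _ => prod_nonneg fun j _ => pow_nonneg (hx0 j) _
        exact mem_finsupp_iff.2 ⟨hS κ hκ, fun j _ => mem_image_of_mem _ hκ⟩
    _ = ∏ j ∈ S, ∑ k ∈ t j, x j ^ k := (prod_sum_eq_sum_finsupp S t _).symm
    _ ≤ ∏ j ∈ S, (1 - x j)⁻¹ :=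
        prod_le_prod (fun j _ => sum_nonneg fun k _ => pow_nonneg (hx0 j) k)
          fun j _ => sum_pow_le_inv_one_sub (hx0 j) (hx1 j) (t j)

theorem prod_inv_one_sub_le_exp_tsum (hx0 : ∀ j, 0 ≤ x j) (hx1 : ∀ j, x j < 1)
    (hx : Summable x) (S : Finset ι) :
    ∏ j ∈ S, (1 - x j)⁻¹ ≤ Real.exp (∑' j, -Real.log (1 - x j)) := by
  have hlog : Summable fun j => -Real.log (1 - x j) := by
    simpa [sub_eq_add_neg] using (Real.summable_log_one_add_of_summable hx.neg).neg
  have hlog0 : ∀ j, 0 ≤ -Real.log (1 - x j) := fun j =>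
    neg_nonneg.2 (Real.log_nonpos (by linarith [hx1 j]) (by linarith [hx0 j]))
  calc ∏ j ∈ S, (1 - x j)⁻¹ = Real.exp (∑ j ∈ S, -Real.log (1 - x j)) := by
        rw [Real.exp_sum]
        refine prod_congr rfl fun j _ => ?_
        rw [Real.exp_neg, Real.exp_log (by linarith [hx1 j])]
    _ ≤ Real.exp (∑' j, -Real.log (1 - x j)) :=
        Real.exp_le_exp.2 (hlog.sum_le_tsum S fun j _ => hlog0 j)

theorem summable_finsuppProd_pow_iff (hx0 : ∀ j, 0 ≤ x j) :
    (Summable fun κ : ι →₀ ℕ => κ.prod fun j n => x j ^ n) ↔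
      (∀ j, x j < 1) ∧ Summable x := by
  refine ⟨fun h => ⟨fun j => ?_, ?_⟩, fun ⟨hx1, hx⟩ => ?_⟩
  · have hgeom : Summable fun k => x j ^ k := by
      simpa [Function.comp_def] using h.comp_injective (Finsupp.single_injective j)
    simpa [abs_of_nonneg (hx0 j)] using summable_geometric_iff_norm_lt_one.1 hgeom
  · simpa [Function.comp_def] using h.comp_injective (Finsupp.single_left_injective one_ne_zero)
  · classical
    exact summable_of_sum_le (fun κ => prod_nonneg fun j _ => pow_nonneg (hx0 j) _) fun s =>
      (sum_finsuppProd_pow_le_prod_inv_one_sub hx0 hx1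
        fun κ => subset_biUnion_of_mem Finsupp.support).trans
      (prod_inv_one_sub_le_exp_tsum hx0 hx1 hx _)

end Summability

open MvPolynomial

theorem MvPolynomial.coeff_sum_monomial {R σ : Type*} [CommSemiring R] [DecidableEq σ]
    (s : Finset (σ →₀ ℕ)) (c : (σ →₀ ℕ) → R) (κ : σ →₀ ℕ) :
    coeff κ (∑ μ ∈ s, monomial μ (c μ)) = if κ ∈ s then c κ else 0 := by
  simp [coeff_sum, coeff_monomial]

theorem h2Norm_eq_of_support_subset {f : MvPolynomial ℕ ℂ} {s : Finset (ℕ →₀ ℕ)}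
    (h : f.support ⊆ s) : h2Norm f = √(∑ κ ∈ s, ‖coeff κ f‖ ^ 2) :=
  congrArg Real.sqrt <| sum_subset h fun κ _ hκ => by simp [notMem_support_iff.1 hκ]

theorem h2Norm_sum_monomial (s : Finset (ℕ →₀ ℕ)) (c : (ℕ →₀ ℕ) → ℂ) :
    h2Norm (∑ κ ∈ s, monomial κ (c κ)) = √(∑ κ ∈ s, ‖c κ‖ ^ 2) := by
  have hsupp : (∑ κ ∈ s, monomial κ (c κ)).support ⊆ s := fun κ hκ => by
    by_contra h
    rw [mem_support_iff, coeff_sum_monomial, if_neg h] at hκ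
    exact hκ rfl
  rw [h2Norm_eq_of_support_subset hsupp]
  exact congrArg Real.sqrt <| sum_congr rfl fun κ hκ => by rw [coeff_sum_monomial, if_pos hκ]

theorem le_sq_of_le_mul_sqrt {S C : ℝ} (hS : 0 ≤ S) (h : S ≤ C * √S) : S ≤ C ^ 2 := by
  nlinarith [Real.sq_sqrt hS, sq_nonneg (C - √S)]

section Evaluation

variable {lam : ℕ → ℂ}

theorem sum_norm_sq_le_of_norm_eval_le {C : ℝ}
    (hC : ∀ f : MvPolynomial ℕ ℂ, ‖eval lam f‖ ≤ C * h2Norm f) (s : Finset (ℕ →₀ ℕ)) :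
    ∑ κ ∈ s, ‖κ.prod fun j n => lam j ^ n‖ ^ 2 ≤ C ^ 2 := by
  set S := ∑ κ ∈ s, ‖κ.prod fun j n => lam j ^ n‖ ^ 2
  set f := ∑ κ ∈ s, monomial κ (starRingEnd ℂ (κ.prod fun j n => lam j ^ n))
  have heval : eval lam f = S := by
    simp only [f, S, map_sum, eval_monomial, Complex.conj_mul', Complex.ofReal_sum,
      Complex.ofReal_pow]
  have hnorm : h2Norm f = √S := by
    simp only [f, S, h2Norm_sum_monomial, Complex.norm_conj]
  have hS : 0 ≤ S := sum_nonneg fun κ _ => sq_nonneg _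
  refine le_sq_of_le_mul_sqrt hS ?_
  simpa [heval, hnorm, abs_of_nonneg hS] using hC f

theorem norm_eval_le_sqrt_tsum_mul_h2Norm
    (hlam : Summable fun κ : ℕ →₀ ℕ => ‖κ.prod fun j n => lam j ^ n‖ ^ 2)
    (f : MvPolynomial ℕ ℂ) :
    ‖eval lam f‖ ≤ √(∑' κ : ℕ →₀ ℕ, ‖κ.prod fun j n => lam j ^ n‖ ^ 2) * h2Norm f := by
  calc ‖eval lam f‖
      ≤ ∑ κ ∈ f.support, ‖coeff κ f‖ * ‖κ.prod fun j n => lam j ^ n‖ :=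
        (norm_sum_le _ _).trans_eq (sum_congr rfl fun κ _ => norm_mul _ _)
    _ ≤ h2Norm f * √(∑ κ ∈ f.support, ‖κ.prod fun j n => lam j ^ n‖ ^ 2) :=
        Real.sum_mul_le_sqrt_mul_sqrt _ _ _
    _ ≤ h2Norm f * √(∑' κ : ℕ →₀ ℕ, ‖κ.prod fun j n => lam j ^ n‖ ^ 2) :=
        mul_le_mul_of_nonneg_left (Real.sqrt_le_sqrt
          (hlam.sum_le_tsum _ fun κ _ => sq_nonneg _)) (Real.sqrt_nonneg _)
    _ = _ := mul_comm _ _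

theorem exists_norm_eval_le_mul_h2Norm_iff_summable :
    (∃ C > 0, ∀ f : MvPolynomial ℕ ℂ, ‖eval lam f‖ ≤ C * h2Norm f) ↔
      Summable fun κ : ℕ →₀ ℕ => ‖κ.prod fun j n => lam j ^ n‖ ^ 2 := by
  refine ⟨fun ⟨C, _, hC⟩ => summable_of_sum_le (fun κ => sq_nonneg _)
      (sum_norm_sq_le_of_norm_eval_le hC),
    fun hlam => ⟨_, ?_, norm_eval_le_sqrt_tsum_mul_h2Norm hlam⟩⟩
  refine Real.sqrt_pos.2 (lt_of_lt_of_le one_pos ?_)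
  simpa using hlam.le_tsum 0 fun κ _ => sq_nonneg _

end Evaluation

theorem stmt15 (lam : ℕ → ℂ) :
    (∃ C > 0, ∀ f : MvPolynomial ℕ ℂ,
        ‖MvPolynomial.eval lam f‖ ≤ C * h2Norm f) ↔
      ((∀ j, ‖lam j‖ < 1) ∧ Summable fun j => ‖lam j‖ ^ 2) := by
  have hnorm_sq (κ : ℕ →₀ ℕ) :
      ‖κ.prod fun j n => lam j ^ n‖ ^ 2 = κ.prod fun j n => (‖lam j‖ ^ 2) ^ n := by
    simp only [Finsupp.prod, norm_prod, norm_pow, ← prod_pow, ← pow_mul, mul_comm]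
  simp_rw [exists_norm_eval_le_mul_h2Norm_iff_summable, hnorm_sq,
    summable_finsuppProd_pow_iff fun j => sq_nonneg ‖lam j‖, sq_lt_one_iff₀ (norm_nonneg _)]
end

section
/- Let μ be a finite positive Borel measure on ℝ^∞ = ℕ → ℝ concentrated on (-1,1)^∞ which is a Carleson measure for H²(𝕋^∞). Then there is a constant C > 0 such that for every s ∈ (-1,1)^∞ and every d ≥ 1, μ(I_s) ≤ C ∏_{j=1}^d (1 - s_j²), where I_s = {t ∈ (-1,1)^∞ : |t_j| ≥ |s_j| and t_j s_j ≥ 0 for all j ≥ 1}. Consequently μ(I_s) ≤ C ∏_{j=1}^∞ (1 - s_j²), the infinite product being interpreted as 0 when ∑_j s_j² = ∞. -/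
/-
Test the Carleson inequality on the truncated reproducing kernel
`P = ∏_{j<d} ∑_{k<n} (s_j z_j)^k`. Its factors involve disjoint variables, so
`‖P‖² = ∏_{j<d} ∑_{k<n} s_j^{2k} =: A`, while on the window `I_s` we have `s_j t_j ≥ s_j² ≥ 0`,
hence `|P(t)| ≥ A`. Chebyshev's inequality gives `A² μ(I_s) ≤ C A`, i.e. `μ(I_s) ≤ C / A`, and
letting `n → ∞` turns `1 / A` into `∏_{j<d} (1 - s_j²)`. The bound for the infinite product is the
limit `d → ∞`; when the product does not converge, `∏'` is `1` and the case `d = 0` applies.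
-/

open MeasureTheory Finset
open scoped BigOperators ENNReal

/-- The generalized Carleson window
`I_s = {t ∈ (-1,1)^∞ : |t_j| ≥ |s_j| and t_j s_j ≥ 0 for all j}`. -/
def windowSet (s : ℕ → ℝ) : Set (ℕ → ℝ) :=
  {t | (∀ j, |t j| < 1) ∧ ∀ j, |s j| ≤ |t j| ∧ 0 ≤ t j * s j}

namespace MvPolynomial

section DisjointVars

variable {σ R : Type*} [CommSemiring R] {f g : MvPolynomial σ R}

theorem add_injOn_support_product_of_disjoint_vars (h : Disjoint f.vars g.vars) :
    Set.InjOn (fun p : (σ →₀ ℕ) × (σ →₀ ℕ) => p.1 + p.2) ↑(f.support ×ˢ g.support) := by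
  rintro ⟨a, b⟩ hab ⟨a', b'⟩ hab' heq
  simp only [coe_product, Set.mem_prod, mem_coe] at hab hab' heq
  have ha : a = a' := by
    ext i
    by_cases hi : i ∈ g.vars
    · have hf : i ∉ f.vars := Finset.disjoint_right.mp h hi
      rw [mem_support_notMem_vars_zero hab.1 hf, mem_support_notMem_vars_zero hab'.1 hf]
    · simpa [mem_support_notMem_vars_zero hab.2 hi, mem_support_notMem_vars_zero hab'.2 hi]
        using DFunLike.congr_fun heq i
  subst ha
  simp [add_left_cancel heq]

theorem coeff_add_mul_of_disjoint_vars (h : Disjoint f.vars g.vars) {a b : σ →₀ ℕ}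
    (ha : a ∈ f.support) (hb : b ∈ g.support) :
    coeff (a + b) (f * g) = coeff a f * coeff b g := by
  classical
  rw [coeff_mul, Finset.sum_eq_single (a, b)]
  · rintro ⟨a', b'⟩ hmem hne
    by_contra hprod
    refine hne (add_injOn_support_product_of_disjoint_vars h ?_ ?_ (mem_antidiagonal.mp hmem))
    · simp only [coe_product, Set.mem_prod, mem_coe, mem_support_iff]
      exact ⟨left_ne_zero_of_mul hprod, right_ne_zero_of_mul hprod⟩
    · simpa using ⟨mem_support_iff.mp ha, mem_support_iff.mp hb⟩
  · simp

end DisjointVars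

theorem norm_eval_le_sum_norm_coeff {σ R : Type*} [NormedCommRing R] [NormOneClass R]
    (f : MvPolynomial σ R) {x : σ → R} (hx : ∀ i, ‖x i‖ ≤ 1) :
    ‖eval x f‖ ≤ ∑ κ ∈ f.support, ‖coeff κ f‖ := by
  rw [eval_eq]
  refine (norm_sum_le _ _).trans (sum_le_sum fun κ _ => ?_)
  have hmono : ‖∏ i ∈ κ.support, x i ^ κ i‖ ≤ 1 :=
    (Finset.norm_prod_le _ _).trans (prod_le_one (fun _ _ => norm_nonneg _) fun i _ =>
      (norm_pow_le _ _).trans (pow_le_one₀ (norm_nonneg _) (hx i)))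
  exact (norm_mul_le _ _).trans (mul_le_of_le_one_right (norm_nonneg _) hmono)

end MvPolynomial

open MvPolynomial Filter Topology

theorem h2Norm_eq_sqrt_sum_of_support_subset {f : MvPolynomial ℕ ℂ} {T : Finset (ℕ →₀ ℕ)}
    (hT : f.support ⊆ T) : h2Norm f = Real.sqrt (∑ κ ∈ T, ‖coeff κ f‖ ^ 2) := by
  rw [h2Norm, sum_subset hT fun κ _ hκ => by simp [notMem_support_iff.mp hκ]]

theorem h2Norm_mul_of_disjoint_vars {f g : MvPolynomial ℕ ℂ} (h : Disjoint f.vars g.vars) :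
    h2Norm (f * g) = h2Norm f * h2Norm g := by
  classical
  have hsupp : (f * g).support ⊆ (f.support ×ˢ g.support).image fun p => p.1 + p.2 :=
    (support_mul f g).trans Finset.add_def.le
  rw [h2Norm_eq_sqrt_sum_of_support_subset hsupp, h2Norm, h2Norm, ← Real.sqrt_mul (by positivity),
    sum_mul_sum, ← sum_product', sum_image (add_injOn_support_product_of_disjoint_vars h)]
  congr 1
  refine sum_congr rfl fun p hp => ?_
  rw [mem_product] at hp
  rw [coeff_add_mul_of_disjoint_vars h hp.1 hp.2, norm_mul, mul_pow]

theorem h2Norm_prod {ι : Type*} (s : Finset ι) (p : ι → MvPolynomial ℕ ℂ)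
    (hp : (s : Set ι).PairwiseDisjoint fun i => (p i).vars) :
    h2Norm (∏ i ∈ s, p i) = ∏ i ∈ s, h2Norm (p i) := by
  classical
  induction s using Finset.induction_on with
  | empty => simp [h2Norm_eq_sqrt_sum_of_support_subset (support_one (R := ℂ)).le]
  | insert a s ha ih =>
    rw [coe_insert, Set.pairwiseDisjoint_insert_of_notMem (mem_coe.not.mpr ha)] at hp
    have hdisj : Disjoint (p a).vars (∏ i ∈ s, p i).vars :=
      ((disjoint_biUnion_right _ _ _).mpr fun i hi => hp.2 i hi).mono_right (vars_prod p)
    rw [prod_insert ha, prod_insert ha, h2Norm_mul_of_disjoint_vars hdisj, ih hp.1]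

noncomputable def geomPoly (x : ℝ) (j n : ℕ) : MvPolynomial ℕ ℂ :=
  ∑ k ∈ range n, monomial (Finsupp.single j k) ((x : ℂ) ^ k)

theorem support_geomPoly_subset (x : ℝ) (j n : ℕ) :
    (geomPoly x j n).support ⊆ (range n).image (Finsupp.single j) := by
  classical
  refine MvPolynomial.support_sum.trans fun κ hκ => ?_
  obtain ⟨k, hk, hκ⟩ := mem_biUnion.mp hκ
  exact mem_image.mpr ⟨k, hk, (mem_singleton.mp (support_monomial_subset hκ)).symm⟩

theorem coeff_single_geomPoly (x : ℝ) {j n k : ℕ} (hk : k < n) :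
    coeff (Finsupp.single j k) (geomPoly x j n) = (x : ℂ) ^ k := by
  simp [geomPoly, coeff_sum, coeff_monomial, (Finsupp.single_injective j).eq_iff, hk]

theorem vars_geomPoly_subset (x : ℝ) (j n : ℕ) : (geomPoly x j n).vars ⊆ {j} := by
  intro i hi
  obtain ⟨κ, hκ, hi⟩ := (mem_vars_iff_mem_support i).mp hi
  obtain ⟨k, -, rfl⟩ := mem_image.mp (support_geomPoly_subset x j n hκ)
  exact Finsupp.support_single_subset hi

theorem h2Norm_geomPoly_sq (x : ℝ) (j n : ℕ) :
    h2Norm (geomPoly x j n) ^ 2 = ∑ k ∈ range n, (x ^ 2) ^ k := by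
  rw [h2Norm_eq_sqrt_sum_of_support_subset (support_geomPoly_subset x j n),
    sum_image fun _ _ _ _ h => Finsupp.single_injective j h, Real.sq_sqrt (by positivity)]
  refine sum_congr rfl fun k hk => ?_
  rw [coeff_single_geomPoly x (mem_range.mp hk), norm_pow, Complex.norm_real, Real.norm_eq_abs,
    ← pow_mul, mul_comm, pow_mul, sq_abs]

theorem eval_geomPoly (x : ℝ) (j n : ℕ) (t : ℕ → ℝ) :
    eval (fun i => (t i : ℂ)) (geomPoly x j n) = ((∑ k ∈ range n, (x * t j) ^ k : ℝ) : ℂ) := by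
  simp [geomPoly, eval_monomial, mul_pow]

/-- Truncation of the reproducing kernel `∏_j (1 - s_j z_j)⁻¹` of `H²(𝕋^∞)` at `s`. -/
noncomputable def truncKernel (s : ℕ → ℝ) (d n : ℕ) : MvPolynomial ℕ ℂ :=
  ∏ j ∈ range d, geomPoly (s j) j n

theorem h2Norm_truncKernel_sq (s : ℕ → ℝ) (d n : ℕ) :
    h2Norm (truncKernel s d n) ^ 2 = ∏ j ∈ range d, ∑ k ∈ range n, (s j ^ 2) ^ k := by
  have hdisj : ((range d : Finset ℕ) : Set ℕ).PairwiseDisjoint fun j => (geomPoly (s j) j n).vars :=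
    fun i _ j _ hij => Finset.disjoint_of_subset_left (vars_geomPoly_subset _ i n)
      (Finset.disjoint_of_subset_right (vars_geomPoly_subset _ j n) (disjoint_singleton.mpr hij))
  simp only [truncKernel, h2Norm_prod _ _ hdisj, ← prod_pow, h2Norm_geomPoly_sq]

theorem eval_truncKernel (s t : ℕ → ℝ) (d n : ℕ) :
    eval (fun i => (t i : ℂ)) (truncKernel s d n) =
      ((∏ j ∈ range d, ∑ k ∈ range n, (s j * t j) ^ k : ℝ) : ℂ) := by
  simp only [truncKernel, map_prod, eval_geomPoly, Complex.ofReal_prod]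

theorem sq_le_mul_of_mem_windowSet {s t : ℕ → ℝ} (ht : t ∈ windowSet s) (j : ℕ) :
    s j ^ 2 ≤ s j * t j := by
  obtain ⟨habs, hsign⟩ := ht.2 j
  calc s j ^ 2 = |s j| * |s j| := by rw [abs_mul_abs_self, sq]
    _ ≤ |s j| * |t j| := mul_le_mul_of_nonneg_left habs (abs_nonneg _)
    _ = s j * t j := by rw [← abs_mul, abs_of_nonneg (mul_comm (t j) (s j) ▸ hsign)]

theorem prod_geom_sum_le_norm_eval_truncKernel {s t : ℕ → ℝ} (ht : t ∈ windowSet s) (d n : ℕ) :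
    ∏ j ∈ range d, ∑ k ∈ range n, (s j ^ 2) ^ k ≤
      ‖eval (fun i => (t i : ℂ)) (truncKernel s d n)‖ := by
  have hle : ∏ j ∈ range d, ∑ k ∈ range n, (s j ^ 2) ^ k ≤
      ∏ j ∈ range d, ∑ k ∈ range n, (s j * t j) ^ k :=
    prod_le_prod (fun j _ => by positivity) fun j _ => sum_le_sum fun k _ =>
      pow_le_pow_left₀ (sq_nonneg _) (sq_le_mul_of_mem_windowSet ht j) k
  rw [eval_truncKernel, Complex.norm_real, Real.norm_eq_abs]
  exact hle.trans (le_abs_self _)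

theorem tendsto_prod_geom_sum {ι : Type*} (s : Finset ι) {x : ι → ℝ} (hx0 : ∀ j ∈ s, 0 ≤ x j)
    (hx1 : ∀ j ∈ s, x j < 1) :
    Tendsto (fun n => ∏ j ∈ s, ∑ k ∈ range n, x j ^ k) atTop (𝓝 (∏ j ∈ s, (1 - x j))⁻¹) := by
  rw [← prod_inv_distrib]
  exact tendsto_finsetProd _ fun j hj =>
    (hasSum_geometric_of_lt_one (hx0 j hj) (hx1 j hj)).tendsto_sum_nat

theorem le_mul_tprod_of_forall_le_mul_prod_range {a : ℕ → ℝ} {m c : ℝ}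
    (h : ∀ d, m ≤ c * ∏ j ∈ range d, a j) : m ≤ c * ∏' j, a j := by
  by_cases ha : Multipliable a
  · exact ge_of_tendsto' (ha.hasProd.tendsto_prod_nat.const_mul c) h
  · simpa [tprod_eq_one_of_not_multipliable ha] using h 0

section Carleson

variable {μ : Measure (ℕ → ℝ)} [IsFiniteMeasure μ]

theorem integrable_norm_eval_sq (hcube : ∀ᵐ t ∂μ, ∀ j, |t j| ≤ 1) (f : MvPolynomial ℕ ℂ) :
    Integrable (fun t => ‖eval (fun j => (t j : ℂ)) f‖ ^ 2) μ := by
  have hcont : Continuous fun t : ℕ → ℝ => ‖eval (fun j => (t j : ℂ)) f‖ ^ 2 :=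
    ((continuous_eval f).comp (continuous_pi fun j =>
      Complex.continuous_ofReal.comp (continuous_apply j))).norm.pow 2
  refine Integrable.mono' (integrable_const ((∑ κ ∈ f.support, ‖coeff κ f‖) ^ 2))
    hcont.aestronglyMeasurable ?_
  filter_upwards [hcube] with t ht
  rw [Real.norm_eq_abs, abs_of_nonneg (by positivity)]
  refine pow_le_pow_left₀ (norm_nonneg _) (f.norm_eval_le_sum_norm_coeff fun j => ?_) 2
  rw [Complex.norm_real, Real.norm_eq_abs]
  exact ht j

theorem sq_mul_measureReal_le_of_le_norm_eval (hcube : ∀ᵐ t ∂μ, ∀ j, |t j| ≤ 1) {C : ℝ}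
    {f : MvPolynomial ℕ ℂ}
    (hCar : ∫ t, ‖eval (fun j => (t j : ℂ)) f‖ ^ 2 ∂μ ≤ C * h2Norm f ^ 2)
    {E : Set (ℕ → ℝ)} {a : ℝ} (ha : 0 ≤ a) (hE : ∀ t ∈ E, a ≤ ‖eval (fun j => (t j : ℂ)) f‖) :
    a ^ 2 * μ.real E ≤ C * h2Norm f ^ 2 := by
  have hsub : E ⊆ {t | a ^ 2 ≤ ‖eval (fun j => (t j : ℂ)) f‖ ^ 2} := fun t ht =>
    pow_le_pow_left₀ ha (hE t ht) 2
  calc a ^ 2 * μ.real E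
      ≤ a ^ 2 * μ.real {t | a ^ 2 ≤ ‖eval (fun j => (t j : ℂ)) f‖ ^ 2} :=
      mul_le_mul_of_nonneg_left (measureReal_mono hsub) (sq_nonneg a)
    _ ≤ ∫ t, ‖eval (fun j => (t j : ℂ)) f‖ ^ 2 ∂μ :=
      mul_meas_ge_le_integral_of_nonneg (ae_of_all _ fun _ => by positivity)
        (integrable_norm_eval_sq hcube f) _
    _ ≤ C * h2Norm f ^ 2 := hCar

theorem measureReal_windowSet_mul_le (hcube : ∀ᵐ t ∂μ, ∀ j, |t j| ≤ 1) {C : ℝ}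
    (hCar : ∀ f : MvPolynomial ℕ ℂ,
      ∫ t, ‖eval (fun j => (t j : ℂ)) f‖ ^ 2 ∂μ ≤ C * h2Norm f ^ 2)
    (s : ℕ → ℝ) (d n : ℕ) :
    μ.real (windowSet s) * ∏ j ∈ range d, ∑ k ∈ range (n + 1), (s j ^ 2) ^ k ≤ C := by
  set A := ∏ j ∈ range d, ∑ k ∈ range (n + 1), (s j ^ 2) ^ k
  have hA : 0 < A := prod_pos fun j _ => geom_sum_pos (sq_nonneg _) n.succ_ne_zero
  have hbound := sq_mul_measureReal_le_of_le_norm_eval hcube (hCar (truncKernel s d (n + 1)))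
    hA.le fun t ht => prod_geom_sum_le_norm_eval_truncKernel ht d (n + 1)
  rw [h2Norm_truncKernel_sq] at hbound
  nlinarith

theorem measureReal_windowSet_le (hcube : ∀ᵐ t ∂μ, ∀ j, |t j| ≤ 1) {C : ℝ}
    (hCar : ∀ f : MvPolynomial ℕ ℂ,
      ∫ t, ‖eval (fun j => (t j : ℂ)) f‖ ^ 2 ∂μ ≤ C * h2Norm f ^ 2)
    {s : ℕ → ℝ} (hs : ∀ j, |s j| < 1) (d : ℕ) :
    μ.real (windowSet s) ≤ C * ∏ j ∈ range d, (1 - s j ^ 2) := by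
  have hsq : ∀ j, s j ^ 2 < 1 := fun j => by
    simpa [sq_abs] using pow_lt_one₀ (abs_nonneg _) (hs j) two_ne_zero
  have hlim := ((tendsto_prod_geom_sum (range d) (fun j _ => sq_nonneg (s j))
    fun j _ => hsq j).comp (tendsto_add_atTop_nat 1)).const_mul (μ.real (windowSet s))
  rw [← mul_inv_le_iff₀ (prod_pos fun j _ => sub_pos.mpr (hsq j))]
  exact le_of_tendsto' hlim (measureReal_windowSet_mul_le hcube hCar s d)

end Carleson

theorem stmt18 (μ : Measure (ℕ → ℝ)) [IsFiniteMeasure μ]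
    (hconc : μ {t | ¬ ∀ j, |t j| < 1} = 0)
    (hCarleson : ∃ C > 0, ∀ f : MvPolynomial ℕ ℂ,
      ∫ t, ‖MvPolynomial.eval (fun j => (t j : ℂ)) f‖ ^ 2 ∂μ ≤
        C * h2Norm f ^ 2) :
    ∃ C > 0,
      (∀ s : ℕ → ℝ, (∀ j, |s j| < 1) → ∀ d : ℕ, 1 ≤ d →
        μ (windowSet s) ≤
          ENNReal.ofReal (C * ∏ j ∈ Finset.range d, (1 - s j ^ 2))) ∧
      (∀ s : ℕ → ℝ, (∀ j, |s j| < 1) →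
        μ (windowSet s) ≤ ENNReal.ofReal (C * ∏' j : ℕ, (1 - s j ^ 2))) := by
  obtain ⟨C, hC, hCar⟩ := hCarleson
  have hcube : ∀ᵐ t ∂μ, ∀ j, |t j| ≤ 1 := (ae_iff.mpr hconc).mono fun t ht j => (ht j).le
  refine ⟨C, hC, fun s hs d _ => ?_, fun s hs => ?_⟩
  · rw [← ofReal_measureReal]
    exact ENNReal.ofReal_le_ofReal (measureReal_windowSet_le hcube hCar hs d)
  · rw [← ofReal_measureReal]
    exact ENNReal.ofReal_le_ofReal
      (le_mul_tprod_of_forall_le_mul_prod_range (measureReal_windowSet_le hcube hCar hs))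
end

section
/- There exists a finite positive Borel measure μ on ℝ^∞ = ℕ → ℝ concentrated on (-1,1)^∞ such that the supremum over all d ≥ 1 and all s ∈ (-1,1)^∞ of the quantity ∏_{j=1}^d (1 - s_j²) · ∫ ∏_{j=1}^d (1 - t_j s_j)^{-2} dμ(t) is finite, and yet μ is not a Carleson measure for H²(𝕋^∞). -/
/-!
Take `μ = ∑_d q^d ∑_{T ⊆ {0,…,d-1}} δ_{x(d,T)}`, where `x(d,T)` has coordinates `±1/2`
(sign `+` exactly on `T`) below `d` and `0` from `d` on. Tested against normalized Szegő
kernels, each coordinate `j < d` contributes on average over the two signs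
`(1 - s²)((1 - s/2)⁻² + (1 + s/2)⁻²)/2 ≤ 1`, and each coordinate `j ≥ d` contributes
`1 - s² ≤ 1`, so the test is bounded by the mass `∑_d (2q)^d` of `μ`, finite for `q < 1/2`.
On the other hand `f_D = ∏_{j<D} (2 + z_j²)` has `‖f_D‖² = 5^D`, while the atoms of level `D`
alone give `∫ |f_D|² dμ ≥ (2q)^D (81/16)^D`. As `81/16 > 5`, any `q ∈ (40/81, 1/2)` makes
`∫ |f_D|² dμ / ‖f_D‖²` grow like `(81q/40)^D`.
-/

open MeasureTheory Finset
open scoped BigOperators ENNReal NNReal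

noncomputable section

def signPoint (d : ℕ) (T : Finset ℕ) : ℕ → ℝ :=
  fun j => if j < d then (if j ∈ T then 1 / 2 else -(1 / 2)) else 0

def signMeasure (q : ℝ≥0) : Measure (ℕ → ℝ) :=
  Measure.sum fun d =>
    (q : ℝ≥0∞) ^ d • ∑ T ∈ (range d).powerset, Measure.dirac (signPoint d T)

lemma abs_signPoint_le (d : ℕ) (T : Finset ℕ) (j : ℕ) : |signPoint d T j| ≤ 1 / 2 := by
  unfold signPoint
  split_ifs <;> norm_num [abs_le]

lemma signPoint_sq_of_lt {d j : ℕ} (T : Finset ℕ) (hj : j < d) :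
    signPoint d T j ^ 2 = 1 / 4 := by
  unfold signPoint
  split_ifs <;> norm_num

lemma sum_powerset_prod_signPoint {R : Type*} [CommSemiring R] (d : ℕ) (g : ℕ → ℝ → R) :
    ∑ T ∈ (range d).powerset, ∏ j ∈ range d, g j (signPoint d T j)
      = ∏ j ∈ range d, (g j (1 / 2) + g j (-(1 / 2))) := by
  rw [prod_add]
  refine sum_congr rfl fun T hT => ?_
  rw [← prod_sdiff (mem_powerset.mp hT), mul_comm]
  congr 1 <;> refine prod_congr rfl fun j hj => ?_
  · simp [signPoint, mem_range.mp (mem_powerset.mp hT hj), hj]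
  · obtain ⟨hjd, hjT⟩ := mem_sdiff.mp hj
    simp [signPoint, mem_range.mp hjd, hjT]

namespace signMeasure

variable (q : ℝ≥0)

lemma lintegral_eq (f : (ℕ → ℝ) → ℝ≥0∞) :
    ∫⁻ t, f t ∂signMeasure q
      = ∑' d, (q : ℝ≥0∞) ^ d * ∑ T ∈ (range d).powerset, f (signPoint d T) := by
  simp only [signMeasure, lintegral_sum_measure, lintegral_smul_measure,
    lintegral_finsetSum_measure, lintegral_dirac, smul_eq_mul]

lemma apply_eq (A : Set (ℕ → ℝ)) :
    signMeasure q A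
      = ∑' d, (q : ℝ≥0∞) ^ d * ∑ T ∈ (range d).powerset, A.indicator 1 (signPoint d T) := by
  simp only [signMeasure, Measure.sum_apply_of_countable, Measure.smul_apply,
    Measure.coe_finsetSum, Finset.sum_apply, Measure.dirac_apply, smul_eq_mul]

lemma univ_eq : signMeasure q Set.univ = ∑' d, (2 * (q : ℝ≥0∞)) ^ d := by
  simp [apply_eq, mul_pow, mul_comm]

lemma isFiniteMeasure (hq : 2 * q < 1) : IsFiniteMeasure (signMeasure q) := by
  refine ⟨?_⟩
  rw [univ_eq, ENNReal.tsum_geometric]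
  refine ENNReal.inv_lt_top.mpr (tsub_pos_of_lt ?_)
  exact_mod_cast hq

lemma ae_abs_le_half : ∀ᵐ t ∂signMeasure q, ∀ j, |t j| ≤ 1 / 2 := by
  rw [ae_iff, apply_eq]
  refine ENNReal.tsum_eq_zero.mpr fun d => ?_
  rw [sum_eq_zero fun T _ => Set.indicator_of_notMem (not_not_intro (abs_signPoint_le d T)) _,
    mul_zero]

lemma measure_compl_cube : signMeasure q {t | ¬ ∀ j, |t j| < 1} = 0 := by
  refine measure_mono_null ?_ (ae_iff.mp (ae_abs_le_half q))
  intro t ht hle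
  exact ht fun j => (hle j).trans_lt (by norm_num)

end signMeasure

/-- `(1 - y²) k_y(x)²`, with `k_y(x) = (1 - x y)⁻¹` the Szegő kernel of `H²(𝔻)`. -/
def szegoWeight (x y : ℝ) : ℝ := (1 - y ^ 2) * ((1 - x * y)⁻¹) ^ 2

namespace szegoWeight

lemma nonneg (x : ℝ) {y : ℝ} (hy : |y| < 1) : 0 ≤ szegoWeight x y := by
  have : y ^ 2 < 1 := by rwa [sq_lt_one_iff_abs_lt_one]
  unfold szegoWeight
  nlinarith [sq_nonneg (1 - x * y)⁻¹]

lemma right_zero (x : ℝ) : szegoWeight x 0 = 1 := by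
  simp [szegoWeight]

lemma left_zero_le_one (y : ℝ) : szegoWeight 0 y ≤ 1 := by
  simp only [szegoWeight, zero_mul, sub_zero, inv_one, one_pow, mul_one]
  nlinarith [sq_nonneg y]

lemma half_add_neg_half_le_two {y : ℝ} (hy : |y| < 1) :
    szegoWeight (1 / 2) y + szegoWeight (-(1 / 2)) y ≤ 2 := by
  obtain ⟨h1, h2⟩ := abs_lt.mp hy
  have ha : 0 < 1 - 1 / 2 * y := by linarith
  have hb : 0 < 1 - -(1 / 2) * y := by linarith
  simp only [szegoWeight, inv_pow, ← div_eq_mul_inv]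
  rw [div_add_div _ _ (pow_pos ha 2).ne' (pow_pos hb 2).ne', div_le_iff₀ (by positivity)]
  nlinarith [sq_nonneg y, sq_nonneg (y * y)]

end szegoWeight

lemma prod_range_le_prod_range_of_eq_one {g : ℕ → ℝ} {D d : ℕ} (h0 : ∀ j, 0 ≤ g j)
    (hD : ∀ j, D ≤ j → g j = 1) (hd : ∀ j, d ≤ j → g j ≤ 1) :
    ∏ j ∈ range D, g j ≤ ∏ j ∈ range d, g j := by
  rw [← prod_inter_mul_prod_sdiff (range D) (range d),
    ← prod_inter_mul_prod_sdiff (range d) (range D), inter_comm]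
  have hone : ∏ j ∈ range d \ range D, g j = 1 :=
    prod_eq_one fun j hj => hD j (by simpa using (mem_sdiff.mp hj).2)
  rw [hone, mul_one]
  refine mul_le_of_le_one_right (prod_nonneg fun j _ => h0 j) (prod_le_one (fun j _ => h0 j) ?_)
  exact fun j hj => hd j (by simpa using (mem_sdiff.mp hj).2)

lemma sum_powerset_prod_szegoWeight_le (d D : ℕ) {s : ℕ → ℝ} (hs : ∀ j, |s j| < 1) :
    ∑ T ∈ (range d).powerset, ∏ j ∈ range D, szegoWeight (signPoint d T j) (s j) ≤ 2 ^ d := by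
  -- with `s` cut off at `D`, every factor beyond `D` equals `1`
  set s' : ℕ → ℝ := fun j => if j < D then s j else 0
  have hs' : ∀ j, |s' j| < 1 := fun j => by
    simp only [s']; split_ifs <;> simp [hs]
  calc ∑ T ∈ (range d).powerset, ∏ j ∈ range D, szegoWeight (signPoint d T j) (s j)
      ≤ ∑ T ∈ (range d).powerset, ∏ j ∈ range d, szegoWeight (signPoint d T j) (s' j) := by
        refine sum_le_sum fun T _ => ?_
        rw [prod_congr rfl fun j hj => by
          rw [show s j = s' j from (if_pos (mem_range.mp hj)).symm]]
        refine prod_range_le_prod_range_of_eq_one (fun j => szegoWeight.nonneg _ (hs' j))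
          (fun j hj => by simp [s', not_lt.mpr hj, szegoWeight.right_zero]) fun j hj => ?_
        simpa [signPoint, not_lt.mpr hj] using szegoWeight.left_zero_le_one (s' j)
    _ = ∏ j ∈ range d, (szegoWeight (1 / 2) (s' j) + szegoWeight (-(1 / 2)) (s' j)) :=
        sum_powerset_prod_signPoint d fun j x => szegoWeight x (s' j)
    _ ≤ ∏ _j ∈ range d, (2 : ℝ) :=
        prod_le_prod (fun j _ => add_nonneg (szegoWeight.nonneg _ (hs' j))
          (szegoWeight.nonneg _ (hs' j))) fun j _ => szegoWeight.half_add_neg_half_le_two (hs' j)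
    _ = 2 ^ d := by rw [prod_const, card_range]

lemma ofReal_prod_one_sub_sq_mul_eq_prod_szegoWeight (D : ℕ) {s : ℕ → ℝ} (hs : ∀ j, |s j| < 1)
    (t : ℕ → ℝ) :
    ENNReal.ofReal (∏ j ∈ range D, (1 - s j ^ 2)) *
        ENNReal.ofReal ((∏ j ∈ range D, (1 - t j * s j)⁻¹) ^ 2)
      = ENNReal.ofReal (∏ j ∈ range D, szegoWeight (t j) (s j)) := by
  have hP : 0 ≤ ∏ j ∈ range D, (1 - s j ^ 2) := prod_nonneg fun j _ => by
    have : s j ^ 2 < 1 := (sq_lt_one_iff_abs_lt_one _).mpr (hs j)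
    linarith
  rw [← ENNReal.ofReal_mul hP, ← prod_pow, ← prod_mul_distrib]
  rfl

lemma signMeasure.ofReal_prod_mul_lintegral_le_univ (q : ℝ≥0) (D : ℕ) {s : ℕ → ℝ}
    (hs : ∀ j, |s j| < 1) :
    ENNReal.ofReal (∏ j ∈ range D, (1 - s j ^ 2)) *
        ∫⁻ t, ENNReal.ofReal ((∏ j ∈ range D, (1 - t j * s j)⁻¹) ^ 2) ∂signMeasure q
      ≤ signMeasure q Set.univ := by
  rw [← lintegral_const_mul' _ _ ENNReal.ofReal_ne_top, signMeasure.univ_eq]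
  simp_rw [ofReal_prod_one_sub_sq_mul_eq_prod_szegoWeight D hs, signMeasure.lintegral_eq, mul_pow]
  refine ENNReal.tsum_le_tsum fun d => ?_
  rw [mul_comm ((2 : ℝ≥0∞) ^ d)]
  gcongr
  rw [← ENNReal.ofReal_sum_of_nonneg fun T _ =>
    prod_nonneg fun j _ => szegoWeight.nonneg _ (hs j)]
  exact (ENNReal.ofReal_le_ofReal (sum_powerset_prod_szegoWeight_le d D hs)).trans_eq (by simp)

namespace MvPolynomial

lemma sum_support_norm_sq_sum_monomial {σ ι R : Type*} [NormedCommRing R] (s : Finset ι)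
    (e : ι → σ →₀ ℕ) (c : ι → R) (he : Set.InjOn e s) :
    ∑ κ ∈ (∑ i ∈ s, monomial (e i) (c i)).support,
        ‖coeff κ (∑ i ∈ s, monomial (e i) (c i))‖ ^ 2 = ∑ i ∈ s, ‖c i‖ ^ 2 := by
  classical
  set p := ∑ i ∈ s, monomial (e i) (c i)
  have hcoeff : ∀ i ∈ s, coeff (e i) p = c i := fun i hi => by
    rw [coeff_sum, sum_eq_single i (fun k hk hki => by
      rw [coeff_monomial, if_neg (he.ne hk hi hki)]) (fun h => absurd hi h), coeff_monomial,
      if_pos rfl]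
  have hsupp : p.support ⊆ s.image e := fun κ hκ => by
    by_contra h
    refine mem_support_iff.mp hκ ?_
    rw [coeff_sum]
    refine sum_eq_zero fun i hi => ?_
    rw [coeff_monomial, if_neg fun h' => h (mem_image.mpr ⟨i, hi, h'⟩)]
  rw [sum_subset hsupp fun κ _ hκ => by rw [notMem_support_iff.mp hκ, norm_zero, sq, zero_mul],
    sum_image he]
  exact sum_congr rfl fun i hi => by rw [hcoeff i hi]

end MvPolynomial

open MvPolynomial in
def testPoly (D : ℕ) : MvPolynomial ℕ ℂ := ∏ j ∈ range D, (C 2 + X j ^ 2)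

open MvPolynomial in
lemma testPoly_eq_sum_monomial (D : ℕ) :
    testPoly D = ∑ T ∈ (range D).powerset,
      monomial (∑ j ∈ T, Finsupp.single j 2) ((2 : ℂ) ^ #(range D \ T)) := by
  rw [testPoly, prod_congr rfl fun j _ => add_comm _ _, prod_add]
  refine sum_congr rfl fun T _ => ?_
  simp only [X_pow_eq_monomial, ← monomial_sum_one, prod_const, ← map_pow, mul_comm,
    C_mul_monomial, one_mul]

lemma h2Norm_testPoly_sq (D : ℕ) : h2Norm (testPoly D) ^ 2 = 5 ^ D := by
  rw [h2Norm, Real.sq_sqrt (sum_nonneg fun κ _ => sq_nonneg _), testPoly_eq_sum_monomial,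
    MvPolynomial.sum_support_norm_sq_sum_monomial]
  · calc ∑ T ∈ (range D).powerset, ‖(2 : ℂ) ^ #(range D \ T)‖ ^ 2
        = ∑ T ∈ (range D).powerset, (∏ _j ∈ T, (1 : ℝ)) * ∏ _j ∈ range D \ T, 4 := by
          refine sum_congr rfl fun T _ => ?_
          rw [prod_const_one, one_mul, prod_const, norm_pow, Complex.norm_two, ← pow_mul,
            mul_comm, pow_mul]
          norm_num
      _ = 5 ^ D := by rw [← prod_add]; norm_num
  · intro T₁ _ T₂ _ h
    ext j
    have := DFunLike.congr_fun h j
    simp only [Finsupp.coe_finsetSum, Finset.sum_apply, Finsupp.single_apply, sum_ite_eq']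
      at this
    split_ifs at this <;> simp_all

lemma continuous_eval_ofReal (f : MvPolynomial ℕ ℂ) :
    Continuous fun t : ℕ → ℝ => MvPolynomial.eval (fun j => (t j : ℂ)) f :=
  (MvPolynomial.continuous_eval f).comp
    (continuous_pi fun j => Complex.continuous_ofReal.comp (continuous_apply j))

lemma norm_eval_testPoly (D : ℕ) (t : ℕ → ℝ) :
    ‖MvPolynomial.eval (fun j => (t j : ℂ)) (testPoly D)‖ = ∏ j ∈ range D, (2 + t j ^ 2) := by
  simp only [testPoly, map_prod, map_add, map_pow, MvPolynomial.eval_C, MvPolynomial.eval_X,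
    norm_prod]
  refine prod_congr rfl fun j _ => ?_
  rw [← Complex.ofReal_pow, ← Complex.ofReal_ofNat, ← Complex.ofReal_add, Complex.norm_real,
    Real.norm_of_nonneg (by positivity)]

lemma prod_two_add_sq_le {t : ℕ → ℝ} (ht : ∀ j, |t j| ≤ 1 / 2) (D : ℕ) :
    ∏ j ∈ range D, (2 + t j ^ 2) ≤ (9 / 4) ^ D := by
  calc ∏ j ∈ range D, (2 + t j ^ 2) ≤ ∏ _j ∈ range D, (9 / 4 : ℝ) := by
        refine prod_le_prod (fun j _ => by positivity) fun j _ => ?_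
        have := sq_le_sq' (abs_le.mp (ht j)).1 (abs_le.mp (ht j)).2
        linarith
    _ = (9 / 4) ^ D := by rw [prod_const, card_range]

lemma prod_two_add_signPoint_sq (D : ℕ) (T : Finset ℕ) :
    ∏ j ∈ range D, (2 + signPoint D T j ^ 2) = (9 / 4) ^ D := by
  rw [prod_congr rfl fun j hj => by rw [signPoint_sq_of_lt T (mem_range.mp hj)], prod_const,
    card_range]
  norm_num

lemma signMeasure.integral_norm_eval_testPoly_sq_ge (q : ℝ≥0) [IsFiniteMeasure (signMeasure q)]
    (D : ℕ) :
    (2 * q * (81 / 16) : ℝ) ^ D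
      ≤ ∫ t, ‖MvPolynomial.eval (fun j => (t j : ℂ)) (testPoly D)‖ ^ 2 ∂signMeasure q := by
  have hbound : ∀ᵐ t ∂signMeasure q,
      ‖‖MvPolynomial.eval (fun j => (t j : ℂ)) (testPoly D)‖ ^ 2‖ ≤ ((9 / 4) ^ D) ^ 2 := by
    filter_upwards [signMeasure.ae_abs_le_half q] with t ht
    rw [Real.norm_of_nonneg (sq_nonneg _), norm_eval_testPoly]
    exact pow_le_pow_left₀ (prod_nonneg fun j _ => by positivity) (prod_two_add_sq_le ht D) 2
  have hint : Integrable (fun t => ‖MvPolynomial.eval (fun j => (t j : ℂ)) (testPoly D)‖ ^ 2)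
      (signMeasure q) :=
    .of_bound ((continuous_eval_ofReal _).norm.pow 2).aestronglyMeasurable _ hbound
  rw [← ENNReal.ofReal_le_ofReal_iff (integral_nonneg fun t => sq_nonneg _),
    ofReal_integral_eq_lintegral_ofReal hint (ae_of_all _ fun t => sq_nonneg _),
    signMeasure.lintegral_eq]
  refine le_trans (le_of_eq ?_) (ENNReal.le_tsum D)
  simp only [norm_eval_testPoly, prod_two_add_signPoint_sq, sum_const, card_powerset, card_range,
    nsmul_eq_mul]
  rw [← ENNReal.ofReal_coe_nnreal, ← ENNReal.ofReal_pow q.coe_nonneg, ← ENNReal.ofReal_natCast,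
    ← ENNReal.ofReal_mul (by positivity), ← ENNReal.ofReal_mul (by positivity)]
  congr 1
  rw [← pow_mul, mul_comm D 2, pow_mul, Nat.cast_pow, Nat.cast_ofNat, ← mul_pow, ← mul_pow]
  congr 1
  ring

lemma signMeasure.not_bounded_by_h2Norm {q : ℝ≥0} [IsFiniteMeasure (signMeasure q)]
    (hq : 40 / 81 < q) :
    ¬ ∃ C : ℝ, ∀ f : MvPolynomial ℕ ℂ,
      ∫ t, ‖MvPolynomial.eval (fun j => (t j : ℂ)) f‖ ^ 2 ∂signMeasure q ≤ C * h2Norm f ^ 2 := by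
  rintro ⟨C, hC⟩
  have hr : 1 < (q : ℝ) * 81 / 40 := by
    have : (40 / 81 : ℝ) < q := by exact_mod_cast hq
    linarith
  obtain ⟨D, hD⟩ := pow_unbounded_of_one_lt C hr
  have key := (signMeasure.integral_norm_eval_testPoly_sq_ge q D).trans (hC (testPoly D))
  rw [h2Norm_testPoly_sq, show 2 * (q : ℝ) * (81 / 16) = q * 81 / 40 * 5 by ring, mul_pow]
    at key
  exact hD.not_ge (le_of_mul_le_mul_right key (by positivity))

end

theorem stmt19 :
    ∃ μ : Measure (ℕ → ℝ), IsFiniteMeasure μ ∧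
      μ {t | ¬ ∀ j, |t j| < 1} = 0 ∧
      (∃ B : ℝ, ∀ d : ℕ, 1 ≤ d → ∀ s : ℕ → ℝ, (∀ j, |s j| < 1) →
        ENNReal.ofReal (∏ j ∈ Finset.range d, (1 - s j ^ 2)) *
            ∫⁻ t, ENNReal.ofReal
              ((∏ j ∈ Finset.range d, (1 - t j * s j)⁻¹) ^ 2) ∂μ ≤
          ENNReal.ofReal B) ∧
      ¬ (∃ C > 0, ∀ f : MvPolynomial ℕ ℂ,
        ∫ t, ‖MvPolynomial.eval (fun j => (t j : ℂ)) f‖ ^ 2 ∂μ ≤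
          C * h2Norm f ^ 2) := by
  have hq : 2 * (161 / 324 : ℝ≥0) < 1 := by norm_num
  have hfin := signMeasure.isFiniteMeasure _ hq
  refine ⟨signMeasure (161 / 324), hfin, signMeasure.measure_compl_cube _,
    ⟨(signMeasure (161 / 324) Set.univ).toReal, fun d _ s hs => ?_⟩,
    fun ⟨C, _, hC⟩ => signMeasure.not_bounded_by_h2Norm (by norm_num) ⟨C, hC⟩⟩
  rw [ENNReal.ofReal_toReal (measure_ne_top _ _)]
  exact signMeasure.ofReal_prod_mul_lintegral_le_univ _ d hs
end
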